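/- arXiv:1911.12518 — 12 statements merged into one kernel-verified Lean document; each statement's English description precedes it below -/
import Mathlib

section
/- Let m, n, r be natural numbers with r ≤ min(m, n). Then the closure (in the Euclidean topology on real m×n matrices) of the set {A ∈ ℝ^{m×n} : rank(A) = r} equals the set {A ∈ ℝ^{m×n} : rank(A) ≤ r}. In particular the set of matrices of rank at most r is closed, and the matrices of rank exactly r are dense in it. -/
/-!
Lower semicontinuity of the rank (`isOpen_setOfPred_nat_le_rank`) makes `{rank ≤ r}` closed.
Conversely, if `rank A < min m n`, pick `v ≠ 0` in the kernel of `A` and `u` outside its range;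
for a functional `w` with `w v ≠ 0`, the matrices `A + ε u wᵀ` (`ε ≠ 0`) have range
`range A ⊕ span {u}`, hence rank `rank A + 1`, and tend to `A`. Iterating raises the rank to `r`.
-/

open Matrix Module Filter Topology

theorem LinearMap.range_add_smulRight_eq_sup {K V W : Type*} [Field K] [AddCommGroup V]
    [Module K V] [AddCommGroup W] [Module K W] (f : V →ₗ[K] W) (φ : V →ₗ[K] K) (u : W) {v : V}
    (hv : f v = 0) (hφv : φ v ≠ 0) :
    LinearMap.range (f + φ.smulRight u) = LinearMap.range f ⊔ Submodule.span K {u} := by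
  have hu : u ∈ LinearMap.range (f + φ.smulRight u) :=
    ⟨(φ v)⁻¹ • v, by simp [hv, smul_smul, inv_mul_cancel₀ hφv]⟩
  refine le_antisymm ?_ (sup_le ?_ (Submodule.span_singleton_le_iff_mem _ _ |>.mpr hu))
  · rintro _ ⟨x, rfl⟩
    exact Submodule.add_mem_sup (LinearMap.mem_range_self f x)
      (Submodule.smul_mem _ _ (Submodule.mem_span_singleton_self u))
  · rintro _ ⟨x, rfl⟩
    have hfx : f x = (f + φ.smulRight u) x - φ x • u := by simp
    rw [hfx]
    exact Submodule.sub_mem _ (LinearMap.mem_range_self _ x) (Submodule.smul_mem _ _ hu)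

namespace Matrix

section Field

variable {m n K : Type*} [Fintype m] [Fintype n] [Field K]

theorem rank_add_vecMulVec (A : Matrix m n K) {u : m → K} {v w : n → K}
    (hu : u ∉ LinearMap.range A.mulVecLin) (hv : A *ᵥ v = 0) (hwv : w ⬝ᵥ v ≠ 0) :
    (A + vecMulVec u w).rank = A.rank + 1 := by
  have hmulVecLin : (A + vecMulVec u w).mulVecLin =
      A.mulVecLin + (dotProductBilin K K w).smulRight u := by
    ext x : 1
    simp [vecMulVec_mulVec]
  rw [rank, rank, hmulVecLin, LinearMap.range_add_smulRight_eq_sup _ _ _ (v := v) hv hwv,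
    Submodule.finrank_sup_span_singleton hu]

theorem exists_rank_add_smul_vecMulVec_eq_succ (A : Matrix m n K)
    (hm : A.rank < Fintype.card m) (hn : A.rank < Fintype.card n) :
    ∃ u : m → K, ∃ w : n → K, ∀ ε : K, ε ≠ 0 → (A + ε • vecMulVec u w).rank = A.rank + 1 := by
  classical
  obtain ⟨v, hv, hv0⟩ : ∃ v ∈ LinearMap.ker A.mulVecLin, v ≠ 0 := by
    refine Submodule.exists_mem_ne_zero_of_ne_bot fun hker => ?_
    have := A.mulVecLin.finrank_range_add_finrank_ker
    rw [hker, finrank_bot, finrank_fintype_fun_eq_card] at this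
    exact hn.ne this
  obtain ⟨u, hu⟩ : ∃ u, u ∉ LinearMap.range A.mulVecLin := by
    by_contra! hall
    have htop : LinearMap.range A.mulVecLin = ⊤ := eq_top_iff.2 fun x _ => hall x
    rw [rank, htop, finrank_top, finrank_fintype_fun_eq_card] at hm
    exact hm.false
  obtain ⟨i, hi⟩ := Function.ne_iff.1 hv0
  refine ⟨u, Pi.single i 1, fun ε hε => ?_⟩
  rw [← vecMulVec_smul]
  exact A.rank_add_vecMulVec hu hv (by simpa [smul_dotProduct, single_dotProduct] using ⟨hε, hi⟩)

end Field

variable {m n 𝕜 : Type*} [Fintype m] [Fintype n] [NontriviallyNormedField 𝕜]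

theorem setOf_rank_eq_subset_closure_setOf_rank_eq_succ {k : ℕ}
    (hm : k < Fintype.card m) (hn : k < Fintype.card n) :
    {A : Matrix m n 𝕜 | A.rank = k} ⊆ closure {A | A.rank = k + 1} := by
  rintro A rfl
  obtain ⟨u, w, hrank⟩ := A.exists_rank_add_smul_vecMulVec_eq_succ hm hn
  have hlim : Tendsto (fun ε : 𝕜 => A + ε • vecMulVec u w) (𝓝[≠] 0) (𝓝 A) :=
    ((continuous_const.add (continuous_id.smul continuous_const)).tendsto' 0 A
      (by simp)).mono_left nhdsWithin_le_nhds
  exact mem_closure_of_tendsto hlim (eventually_nhdsWithin_of_forall hrank)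

theorem isClosed_setOf_rank_le [CompleteSpace 𝕜] (r : ℕ) :
    IsClosed {A : Matrix m n 𝕜 | A.rank ≤ r} := by
  classical
  let L : Matrix m n 𝕜 →ₗ[𝕜] (n → 𝕜) →L[𝕜] (m → 𝕜) :=
    LinearMap.toContinuousLinearMap.toLinearMap ∘ₗ toLin'.toLinearMap
  have hL : {A : Matrix m n 𝕜 | A.rank ≤ r} =
      L ⁻¹' {f | ↑(r + 1) ≤ (f : (n → 𝕜) →ₗ[𝕜] m → 𝕜).rank}ᶜ := by
    ext A
    change A.rank ≤ r ↔ ¬ ((r + 1 : ℕ) : Cardinal) ≤ Module.rank 𝕜 (LinearMap.range A.mulVecLin)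
    rw [← finrank_eq_rank, Nat.cast_le, not_le, Nat.lt_succ_iff, rank]
  rw [hL]
  exact (isOpen_setOfPred_nat_le_rank (r + 1)).isClosed_compl.preimage
    L.continuous_of_finiteDimensional

theorem closure_setOf_rank_eq [CompleteSpace 𝕜] {r : ℕ}
    (hm : r ≤ Fintype.card m) (hn : r ≤ Fintype.card n) :
    closure {A : Matrix m n 𝕜 | A.rank = r} = {A | A.rank ≤ r} := by
  refine (closure_minimal (fun A => le_of_eq) (isClosed_setOf_rank_le r)).antisymm ?_
  intro A (hA : A.rank ≤ r)
  induction r, hA using Nat.le_induction with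
  | base => exact subset_closure rfl
  | succ r _ ih =>
    have hstep := closure_mono (setOf_rank_eq_subset_closure_setOf_rank_eq_succ
      (m := m) (n := n) (𝕜 := 𝕜) (by omega : r < _) (by omega : r < _))
    rw [closure_closure] at hstep
    exact hstep (ih (by omega) (by omega))

end Matrix

theorem stmt0 (m n r : ℕ) (h : r ≤ min m n) :
    closure {A : Matrix (Fin m) (Fin n) ℝ | A.rank = r} =
      {A : Matrix (Fin m) (Fin n) ℝ | A.rank ≤ r} :=
  Matrix.closure_setOf_rank_eq (by simpa using (le_min_iff.1 h).1)
    (by simpa using (le_min_iff.1 h).2)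
end

section
/- Let m, n, r be natural numbers with 1 ≤ r ≤ min(m, n) and r < max(m, n). Then the set {A ∈ ℝ^{m×n} : rank(A) = r} of real m×n matrices of rank exactly r is path-connected. -/
/-!
A matrix of rank `r` factors as `B * C` with `B` of full column rank and `C` of full row rank,
and every such product has rank `r`. Transposing if necessary so that `r < n`, the factors (or,
when `r = m`, the matrices themselves) range over sets of linearly independent `r`-tuples in real
vector spaces of dimension `> r`, and these sets are path-connected.

That is proved by induction on `r`. To join `(b₀, b)` to `(c₀, c)`, pick `w` outside both
`span b` and `span c`. Move `b₀` to `w` in the complement of `span b`, and `w` to `c₀` in the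
complement of `span c`: both are complements of subspaces of codimension at least two. In between,
move `b` to `c` keeping `(w, ·)` independent: this is the induction hypothesis in `V ⧸ ℝ ∙ w`,
lifted back to `V` through a linear section of the quotient map.
-/

open Module Set Submodule

theorem IsPathConnected.preimage_of_rightInverse {E F : Type*} [AddCommGroup E] [Module ℝ E]
    [TopologicalSpace E] [IsTopologicalAddGroup E] [ContinuousSMul ℝ E]
    [AddCommGroup F] [Module ℝ F] [TopologicalSpace F]
    {π : E →L[ℝ] F} {σ : F →L[ℝ] E} (hσ : Function.RightInverse σ π) {S : Set F}
    (hS : IsPathConnected S) : IsPathConnected (π ⁻¹' S) := by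
  obtain ⟨y, hy, hjoin⟩ := hS
  refine ⟨σ y, by simpa [hσ y] using hy, fun x hx => ?_⟩
  obtain ⟨γ, hγ⟩ := hjoin hx
  refine ⟨⟨⟨fun t => σ (γ t) + (t : ℝ) • (x - σ (π x)), by fun_prop⟩, by simp, by simp⟩,
    fun t => ?_⟩
  simpa [hσ (γ t), hσ (π x)] using hγ t

section LinearAlgebra

variable {K V U : Type*} [Field K] [AddCommGroup V] [Module K V] [AddCommGroup U] [Module K U]

theorem linearIndependent_finCons_iff_comp {r : ℕ} {w : V} (hw : w ≠ 0) {p : V →ₗ[K] U}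
    (hp : LinearMap.ker p = K ∙ w) {v : Fin r → V} :
    LinearIndependent K (Fin.cons w v : Fin (r + 1) → V) ↔ LinearIndependent K (p ∘ v) := by
  have hdisj : Disjoint (span K (range v)) (LinearMap.ker p) ↔ w ∉ span K (range v) := by
    rw [hp, disjoint_span_singleton]
    exact ⟨fun h hwv => hw (h hwv), fun h hwv => absurd hwv h⟩
  rw [linearIndependent_finCons, ← hdisj]
  exact ⟨fun ⟨hv, hd⟩ => hv.map hd, fun h => ⟨h.of_comp, range_ker_disjoint h⟩⟩

theorem Submodule.exists_notMem_and_notMem_of_ne_top {W₁ W₂ : Submodule K V} (h₁ : W₁ ≠ ⊤)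
    (h₂ : W₂ ≠ ⊤) : ∃ x, x ∉ W₁ ∧ x ∉ W₂ := by
  by_contra! h
  have hcover : ((⊤ : Submodule K V) : Set V) ⊆ W₁ ∪ W₂ :=
    fun x _ => or_iff_not_imp_left.mpr (h x)
  rcases AddSubgroupClass.subset_union.mp hcover with h | h
  exacts [h₁ (top_le_iff.mp h), h₂ (top_le_iff.mp h)]

end LinearAlgebra

section IndependentTuples

variable {V : Type*} [NormedAddCommGroup V] [NormedSpace ℝ V] [FiniteDimensional ℝ V]

theorem joinedIn_finCons_of_notMem_span {r : ℕ} (hr : r + 1 < finrank ℝ V) {v : Fin r → V}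
    (hv : LinearIndependent ℝ v) {x y : V} (hx : x ∉ span ℝ (range v))
    (hy : y ∉ span ℝ (range v)) :
    JoinedIn {f : Fin (r + 1) → V | LinearIndependent ℝ f} (Fin.cons x v) (Fin.cons y v) := by
  have hcodim : 1 < Module.rank ℝ (V ⧸ span ℝ (range v)) := by
    have := finrank_quotient_add_finrank (span ℝ (range v))
    rw [finrank_span_eq_card hv, Fintype.card_fin] at this
    rw [← finrank_eq_rank]
    exact_mod_cast (by omega : 1 < finrank ℝ (V ⧸ span ℝ (range v)))
  have hjoin := (isPathConnected_compl_of_one_lt_codim hcodim).joinedIn x hx y hy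
  refine (hjoin.map (f := fun z => (Fin.cons z v : Fin (r + 1) → V)) (by fun_prop)).mono ?_
  rintro _ ⟨z, hz, rfl⟩
  exact linearIndependent_finCons.mpr ⟨hv, hz⟩

theorem IsPathConnected.setOf_linearIndependent_finCons {r : ℕ} {w : V} (hw : w ≠ 0)
    (h : IsPathConnected {u : Fin r → V ⧸ (ℝ ∙ w) | LinearIndependent ℝ u}) :
    IsPathConnected {v : Fin r → V | LinearIndependent ℝ (Fin.cons w v : Fin (r + 1) → V)} := by
  have : IsClosed ((ℝ ∙ w : Submodule ℝ V) : Set V) := closed_of_finiteDimensional _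
  obtain ⟨s, hs⟩ := (ℝ ∙ w).mkQ.exists_rightInverse_of_surjective (range_mkQ _)
  let π := (LinearMap.compLeft (ℝ ∙ w).mkQ (Fin r)).toContinuousLinearMap
  let σ := (LinearMap.compLeft s (Fin r)).toContinuousLinearMap
  have hσ : Function.RightInverse σ π := fun u => funext fun i => LinearMap.congr_fun hs (u i)
  convert h.preimage_of_rightInverse hσ using 1
  ext v
  exact linearIndependent_finCons_iff_comp hw (ker_mkQ _)

theorem isPathConnected_setOf_linearIndependent {r : ℕ} (hr : r < finrank ℝ V) :
    IsPathConnected {v : Fin r → V | LinearIndependent ℝ v} := by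
  induction r generalizing V with
  | zero =>
    convert isPathConnected_singleton (0 : Fin 0 → V)
    ext v
    simp [Subsingleton.elim v 0]
  | succ r ih =>
    refine isPathConnected_iff.mpr ⟨⟨_, (finBasis ℝ V).linearIndependent.comp _
      (Fin.castLE_injective hr.le)⟩, fun b hb c hc => ?_⟩
    cases b using Fin.consCases with | cons b₀ b => ?_
    cases c using Fin.consCases with | cons c₀ c => ?_
    obtain ⟨hb, hb₀⟩ := linearIndependent_finCons.mp hb
    obtain ⟨hc, hc₀⟩ := linearIndependent_finCons.mp hc
    have hproper {u : Fin r → V} (hu : LinearIndependent ℝ u) : span ℝ (range u) ≠ ⊤ := by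
      intro htop
      have := finrank_span_eq_card hu
      rw [htop, finrank_top, Fintype.card_fin] at this
      omega
    obtain ⟨w, hwb, hwc⟩ := exists_notMem_and_notMem_of_ne_top (hproper hb) (hproper hc)
    have hw : w ≠ 0 := fun h => hwb (h ▸ zero_mem _)
    have : IsClosed ((ℝ ∙ w : Submodule ℝ V) : Set V) := closed_of_finiteDimensional _
    have hquot : r < finrank ℝ (V ⧸ (ℝ ∙ w)) := by
      have := finrank_quotient_add_finrank (ℝ ∙ w)
      rw [finrank_span_singleton hw] at this
      omega
    have hfibre := ((ih hquot).setOf_linearIndependent_finCons hw).joinedIn _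
      (linearIndependent_finCons.mpr ⟨hb, hwb⟩) _ (linearIndependent_finCons.mpr ⟨hc, hwc⟩)
    have hmove : JoinedIn {f : Fin (r + 1) → V | LinearIndependent ℝ f}
        (Fin.cons w b) (Fin.cons w c) :=
      (hfibre.map (f := fun v => (Fin.cons w v : Fin (r + 1) → V)) (by fun_prop)).mono
        (by rintro _ ⟨v, hv, rfl⟩; exact hv)
    exact ((joinedIn_finCons_of_notMem_span hr hb hb₀ hwb).trans hmove).trans
      (joinedIn_finCons_of_notMem_span hr hc hwc hc₀)

end IndependentTuples

namespace Matrix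

section Field

variable {K m n o : Type*} [Field K] [Fintype m] [Fintype n]

theorem linearIndependent_row_iff_rank_eq (A : Matrix m n K) :
    LinearIndependent K A.row ↔ A.rank = Fintype.card m := by
  rw [linearIndependent_iff_card_eq_finrank_span, rank_eq_finrank_span_row, Set.finrank, eq_comm]

theorem linearIndependent_col_iff_rank_eq (A : Matrix m n K) :
    LinearIndependent K A.col ↔ A.rank = Fintype.card n := by
  rw [← row_transpose, linearIndependent_row_iff_rank_eq, rank_transpose]

theorem rank_mul_eq_right_of_rank_eq_card_width [Fintype o] {A : Matrix m n K}
    (hA : A.rank = Fintype.card n) (B : Matrix n o K) : (A * B).rank = B.rank := by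
  have hinj : Function.Injective A.mulVecLin :=
    mulVec_injective_iff.mpr ((linearIndependent_col_iff_rank_eq A).mpr hA)
  rw [rank, rank, mulVecLin_mul, LinearMap.range_comp,
    ← (Submodule.equivMapOfInjective A.mulVecLin hinj _).finrank_eq]

theorem exists_mul_eq_of_rank_eq {A : Matrix m n K} {r : ℕ} (hA : A.rank = r) :
    ∃ (B : Matrix m (Fin r) K) (C : Matrix (Fin r) n K), B.rank = r ∧ C.rank = r ∧ B * C = A := by
  set R := span K (range A.row)
  let b : Basis (Fin r) K R := finBasisOfFinrankEq K R (by rw [← hA, rank_eq_finrank_span_row])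
  let B : Matrix m (Fin r) K := of fun i => b.repr ⟨A i, subset_span (mem_range_self i)⟩
  let C : Matrix (Fin r) n K := of fun k => (b k : n → K)
  have hBC : B * C = A := by
    ext i j
    have hrow := congr_arg (fun x : R => (x : n → K) j)
      (b.sum_repr ⟨A i, subset_span (mem_range_self i)⟩)
    simp only [Submodule.coe_sum, Submodule.coe_smul, Finset.sum_apply, Pi.smul_apply,
      smul_eq_mul] at hrow
    simpa [mul_apply, B, C] using hrow
  have hC : C.rank = r := by
    simpa using (linearIndependent_row_iff_rank_eq C).mp
      (b.linearIndependent.map' R.subtype (ker_subtype R))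
  refine ⟨B, C, le_antisymm (by simpa using B.rank_le_card_width) ?_, hC, hBC⟩
  calc r = (B * C).rank := by rw [hBC, hA]
    _ ≤ B.rank := rank_mul_le_left B C

theorem image_transpose_setOf_rank_eq (r : ℕ) :
    transpose '' {A : Matrix n m K | A.rank = r} = {A : Matrix m n K | A.rank = r} := by
  ext A
  refine ⟨?_, fun hA => ⟨Aᵀ, by simpa [rank_transpose] using hA, transpose_transpose A⟩⟩
  rintro ⟨A, hA, rfl⟩
  simpa [rank_transpose] using hA

end Field

theorem isPathConnected_setOf_rank_eq_height {r n : ℕ} (hr : r < n) :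
    IsPathConnected {A : Matrix (Fin r) (Fin n) ℝ | A.rank = r} := by
  have hrows : {A : Matrix (Fin r) (Fin n) ℝ | A.rank = r} = {A | LinearIndependent ℝ A.row} := by
    simp [linearIndependent_row_iff_rank_eq]
  rw [hrows]
  exact isPathConnected_setOf_linearIndependent (V := Fin n → ℝ) (by simpa using hr)

theorem isPathConnected_setOf_rank_eq_width {m r : ℕ} (hr : r < m) :
    IsPathConnected {A : Matrix (Fin m) (Fin r) ℝ | A.rank = r} := by
  rw [← image_transpose_setOf_rank_eq]
  exact (isPathConnected_setOf_rank_eq_height hr).image continuous_id.matrix_transpose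

theorem isPathConnected_setOf_rank_eq_of_le_of_lt {m n r : ℕ} (hm : r ≤ m) (hn : r < n) :
    IsPathConnected {A : Matrix (Fin m) (Fin n) ℝ | A.rank = r} := by
  obtain rfl | hm := hm.eq_or_lt
  · exact isPathConnected_setOf_rank_eq_height hn
  convert ((isPathConnected_setOf_rank_eq_width hm).prod
    (isPathConnected_setOf_rank_eq_height hn)).image (continuous_fst.matrix_mul continuous_snd)
  ext A
  constructor
  · intro hA
    obtain ⟨B, C, hB, hC, rfl⟩ := exists_mul_eq_of_rank_eq hA
    exact ⟨(B, C), ⟨hB, hC⟩, rfl⟩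
  · rintro ⟨⟨B, C⟩, ⟨hB, hC⟩, rfl⟩
    exact (rank_mul_eq_right_of_rank_eq_card_width (by simpa using hB) C).trans hC

end Matrix

theorem stmt1_general (m n r : ℕ) (h2 : r ≤ min m n) (h3 : r < max m n) :
    IsPathConnected {A : Matrix (Fin m) (Fin n) ℝ | A.rank = r} := by
  rcases lt_max_iff.mp h3 with hm | hn
  · rw [← Matrix.image_transpose_setOf_rank_eq]
    exact (Matrix.isPathConnected_setOf_rank_eq_of_le_of_lt (le_min_iff.mp h2).2 hm).image
      continuous_id.matrix_transpose
  · exact Matrix.isPathConnected_setOf_rank_eq_of_le_of_lt (le_min_iff.mp h2).1 hn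

theorem stmt1 (m n r : ℕ) (h1 : 1 ≤ r) (h2 : r ≤ min m n) (h3 : r < max m n) :
    IsPathConnected {A : Matrix (Fin m) (Fin n) ℝ | A.rank = r} :=
  stmt1_general m n r h2 h3
end

section
/- Let m, n, r be natural numbers with 1 ≤ r ≤ min(m, n). Then the set {A ∈ ℂ^{m×n} : rank(A) = r} of complex m×n matrices of rank exactly r is path-connected. -/
/-!
The invertible complex matrices form a path-connected set: along the complex line
`z ↦ 1 + z • (P - 1)` the determinant is a polynomial in `z` that is nonzero at `0`, so a path from
`0` to `1` in `ℂ` avoiding its finitely many roots yields a path from `1` to `P` inside `GL`.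
Two matrices of equal rank differ by invertible factors on both sides (in suitable bases every
linear map of rank `r` is `(x, y) ↦ (x, 0)` on `Kʳ × Kⁿ⁻ʳ → Kʳ × Kᵐ⁻ʳ`), so the matrices of rank
`r` are the image of `GL_m × GL_n` under `(P, Q) ↦ P * A₀ * Q` for any fixed `A₀` of rank `r`.
-/

open Module Polynomial LinearMap

namespace Matrix

variable {ι : Type*} [Fintype ι] [DecidableEq ι]

theorem joinedIn_one_of_isUnit_det {P : Matrix ι ι ℂ} (hP : IsUnit P.det) :
    JoinedIn {Q : Matrix ι ι ℂ | IsUnit Q.det} 1 P := by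
  let p : ℂ[X] := det (1 + (X : ℂ[X]) • (P - 1).map C)
  have eval_p (z : ℂ) : p.eval z = det (1 + z • (P - 1)) := by
    rw [← coe_evalRingHom, RingHom.map_det]
    congr 1
    ext i j
    by_cases h : i = j <;> simp [h, mul_comm z]
  have hp0 : p ≠ 0 := fun h => by simpa [h] using eval_p 0
  have hj : JoinedIn {z : ℂ | p.IsRoot z}ᶜ 0 1 :=
    ((p.finite_setOfPred_isRoot hp0).countable.isPathConnected_compl_of_one_lt_rank
      (by rw [Complex.rank_real_complex]; norm_num)).joinedIn 0 (by simp [eval_p]) 1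
      (by simpa [eval_p] using hP.ne_zero)
  simpa using (hj.map (f := fun z : ℂ => 1 + z • (P - 1)) (by fun_prop)).mono <| by
    rintro _ ⟨z, hz, rfl⟩
    simpa [eval_p] using hz

theorem isPathConnected_setOf_isUnit_det :
    IsPathConnected {Q : Matrix ι ι ℂ | IsUnit Q.det} :=
  ⟨1, by simp, fun _ hP => joinedIn_one_of_isUnit_det hP⟩

end Matrix

namespace LinearMap

variable {K V W : Type*} [Field K] [AddCommGroup V] [Module K V] [FiniteDimensional K V]
  [AddCommGroup W] [Module K W] [FiniteDimensional K W]

theorem exists_linearEquiv_eq_comp_inl_comp_fst (f : V →ₗ[K] W) {r : ℕ}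
    (hr : finrank K (range f) = r) :
    ∃ (e₁ : V ≃ₗ[K] (Fin r → K) × (Fin (finrank K V - r) → K))
      (e₂ : W ≃ₗ[K] (Fin r → K) × (Fin (finrank K W - r) → K)),
      f = e₂.symm.toLinearMap ∘ₗ inl K _ _ ∘ₗ fst K _ _ ∘ₗ e₁.toLinearMap := by
  obtain ⟨C, hC⟩ := (ker f).exists_isCompl
  obtain ⟨D, hD⟩ := (range f).exists_isCompl
  let φ : C ≃ₗ[K] range f :=
    ((ker f).quotientEquivOfIsCompl C hC).symm ≪≫ₗ f.quotKerEquivRange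
  have hφ (c : C) : (φ c : W) = f c := by simp [φ]
  have hker : finrank K (ker f) = finrank K V - r := by
    have := f.finrank_range_add_finrank_ker; omega
  have hDr : finrank K D = finrank K W - r := by
    have := Submodule.finrank_add_eq_of_isCompl hD; omega
  let ψ : range f ≃ₗ[K] (Fin r → K) := LinearEquiv.ofFinrankEq _ _ (by simpa using hr)
  refine ⟨(Submodule.prodEquivOfIsCompl C (ker f) hC.symm).symm ≪≫ₗ
      (φ ≪≫ₗ ψ).prodCongr (LinearEquiv.ofFinrankEq _ _ (by simpa using hker)),
    (Submodule.prodEquivOfIsCompl (range f) D hD).symm ≪≫ₗ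
      ψ.prodCongr (LinearEquiv.ofFinrankEq _ _ (by simpa using hDr)), ?_⟩
  ext v
  obtain ⟨⟨c, k⟩, rfl⟩ := (Submodule.prodEquivOfIsCompl C (ker f) hC.symm).surjective v
  simp [hφ]

theorem exists_linearEquiv_comp_comp_eq_of_finrank_range_eq {f g : V →ₗ[K] W}
    (h : finrank K (range f) = finrank K (range g)) :
    ∃ (e₁ : V ≃ₗ[K] V) (e₂ : W ≃ₗ[K] W), e₂.toLinearMap ∘ₗ f ∘ₗ e₁.toLinearMap = g := by
  obtain ⟨e₁, e₂, hf⟩ := f.exists_linearEquiv_eq_comp_inl_comp_fst rfl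
  obtain ⟨e₁', e₂', hg⟩ := g.exists_linearEquiv_eq_comp_inl_comp_fst h.symm
  refine ⟨e₁' ≪≫ₗ e₁.symm, e₂ ≪≫ₗ e₂'.symm, ?_⟩
  ext v
  simp [hf, hg]

theorem exists_finrank_range_eq {r : ℕ} (hV : r ≤ finrank K V) (hW : r ≤ finrank K W) :
    ∃ f : V →ₗ[K] W, finrank K (range f) = r := by
  have hV' : finrank K V = finrank K ((Fin r → K) × (Fin (finrank K V - r) → K)) := by
    simp; omega
  have hW' : finrank K W = finrank K ((Fin r → K) × (Fin (finrank K W - r) → K)) := by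
    simp; omega
  let e₁ := LinearEquiv.ofFinrankEq _ _ hV'
  let e₂ := LinearEquiv.ofFinrankEq _ _ hW'
  refine ⟨(e₂.symm.toLinearMap ∘ₗ inl K _ _) ∘ₗ (fst K _ _ ∘ₗ e₁.toLinearMap), ?_⟩
  rw [range_comp_of_range_eq_top _ ?_, finrank_range_of_inj ?_]
  · simp
  · exact e₂.symm.injective.comp LinearMap.inl_injective
  · exact range_eq_top.mpr ((fst_surjective (R := K)).comp e₁.surjective)

end LinearMap

theorem LinearMap.rank_toMatrix' {R m n : Type*} [CommSemiring R] [Fintype n]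
    [DecidableEq n] (f : (n → R) →ₗ[R] m → R) : (toMatrix' f).rank = finrank R (range f) := by
  rw [Matrix.rank, ← Matrix.toLin'_apply', Matrix.toLin'_toMatrix']

namespace Matrix

variable {K m n : Type*} [Field K] [Fintype m] [Fintype n] [DecidableEq n]

theorem exists_isUnit_det_mul_mul_eq_of_rank_eq [DecidableEq m] {A B : Matrix m n K}
    (h : A.rank = B.rank) :
    ∃ (P : Matrix m m K) (Q : Matrix n n K), IsUnit P.det ∧ IsUnit Q.det ∧ P * A * Q = B := by
  obtain ⟨e₁, e₂, he⟩ := exists_linearEquiv_comp_comp_eq_of_finrank_range_eq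
    (f := toLin' A) (g := toLin' B) (by simpa [← rank_toMatrix'] using h)
  refine ⟨toMatrix' e₂.toLinearMap, toMatrix' e₁.toLinearMap, by simpa using e₂.isUnit_det',
    by simpa using e₁.isUnit_det', ?_⟩
  rw [← toMatrix'_toLin' A, ← toMatrix'_comp, ← toMatrix'_comp, LinearMap.comp_assoc, he,
    toMatrix'_toLin']

theorem exists_rank_eq {r : ℕ} (hm : r ≤ Fintype.card m) (hn : r ≤ Fintype.card n) :
    ∃ A : Matrix m n K, A.rank = r := by
  obtain ⟨f, hf⟩ :=
    exists_finrank_range_eq (K := K) (V := n → K) (W := m → K) (by simpa) (by simpa)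
  exact ⟨toMatrix' f, by rw [rank_toMatrix', hf]⟩

theorem setOf_rank_eq_image_mul_mul [DecidableEq m] (A₀ : Matrix m n K) :
    {A : Matrix m n K | A.rank = A₀.rank} =
      (fun PQ : Matrix m m K × Matrix n n K => PQ.1 * A₀ * PQ.2) ''
        ({P | IsUnit P.det} ×ˢ {Q | IsUnit Q.det}) := by
  ext A
  constructor
  · intro hA
    obtain ⟨P, Q, hP, hQ, rfl⟩ := exists_isUnit_det_mul_mul_eq_of_rank_eq hA.symm
    exact ⟨(P, Q), ⟨hP, hQ⟩, rfl⟩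
  · rintro ⟨⟨P, Q⟩, ⟨hP, hQ⟩, rfl⟩
    simp [rank_mul_eq_left_of_isUnit_det Q _ hQ, rank_mul_eq_right_of_isUnit_det P _ hP]

end Matrix

theorem stmt2_general (m n r : ℕ) (h2 : r ≤ min m n) :
    IsPathConnected {A : Matrix (Fin m) (Fin n) ℂ | A.rank = r} := by
  obtain ⟨hm, hn⟩ := le_min_iff.mp h2
  obtain ⟨A₀, rfl⟩ : ∃ A₀ : Matrix (Fin m) (Fin n) ℂ, A₀.rank = r :=
    Matrix.exists_rank_eq (by simpa using hm) (by simpa using hn)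
  rw [Matrix.setOf_rank_eq_image_mul_mul]
  exact (Matrix.isPathConnected_setOf_isUnit_det.prod
    Matrix.isPathConnected_setOf_isUnit_det).image (by fun_prop)

theorem stmt2 (m n r : ℕ) (h1 : 1 ≤ r) (h2 : r ≤ min m n) :
    IsPathConnected {A : Matrix (Fin m) (Fin n) ℂ | A.rank = r} :=
  stmt2_general m n r h2
end

section
/- Let n, r be natural numbers with r ≤ n, and let M_r^H denote the set of Hermitian n×n complex matrices of rank exactly r. For a Hermitian matrix A of rank r, let p(A) denote the number of positive eigenvalues of A counted with multiplicity. Then: (i) if A, B ∈ M_r^H satisfy p(A) = p(B), there is a continuous path from A to B lying entirely in M_r^H; (ii) if p(A) ≠ p(B), there is no continuous path from A to B lying in M_r^H. Consequently M_r^H has exactly r+1 path components when it is nonempty, indexed by the signature (p, r−p). -/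
/-!
The number of positive eigenvalues of a Hermitian `A` is the largest dimension of a subspace on
which `x ↦ re ⟪x, A x⟫` is positive definite: such a subspace meets the span of the eigenvectors
with non-positive eigenvalues trivially. Positive definiteness on a fixed subspace survives small
perturbations, so the numbers of positive and of negative eigenvalues are both lower
semicontinuous; since they add up to the rank, both are locally constant on the Hermitian matrices
of rank `r`, hence constant along paths in that set.

Conversely, write `A = U D Uᴴ` with `U` unitary and `D` real diagonal. A congruence `D ↦ G D Gᴴ`
preserves being Hermitian of rank `r`, and the invertible complex matrices form a path-connected
set, so `A` is joined to `D`. Two real diagonal matrices with the same numbers of positive,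
negative and zero entries become entrywise sign-equal after a permutation (again a congruence),
and then the segment between them keeps every sign, hence the rank.
-/

open Finset Module RCLike Filter Topology

lemma convex_setOf_sign_eq (s : SignType) : Convex ℝ {x : ℝ | SignType.sign x = s} := by
  cases s <;> simp only [SignType.zero_eq_zero, SignType.neg_eq_neg_one, SignType.pos_eq_one,
    sign_eq_zero_iff, sign_eq_neg_one_iff, sign_eq_one_iff]
  exacts [convex_singleton 0, convex_Iio 0, convex_Ioi 0]

namespace OrthonormalBasis

variable {𝕜 E ι : Type*} [RCLike 𝕜] [NormedAddCommGroup E] [InnerProductSpace 𝕜 E] [Fintype ι]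
  {T : E →ₗ[𝕜] E} {b : OrthonormalBasis ι 𝕜 E} {μ : ι → ℝ}

lemma repr_map_of_apply_eq_smul (hb : ∀ i, T (b i) = (μ i : 𝕜) • b i) (x : E) (i : ι) :
    b.repr (T x) i = μ i * b.repr x i := by
  classical
  conv_lhs => rw [← b.sum_repr x]
  simp [map_sum, hb, smul_smul, Finset.sum_apply, Pi.single_apply, mul_comm]

lemma re_inner_map_self_eq_sum (hb : ∀ i, T (b i) = (μ i : 𝕜) • b i) (x : E) :
    re (inner 𝕜 x (T x)) = ∑ i, μ i * ‖b.repr x i‖ ^ 2 := by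
  rw [← b.repr.inner_map_map, PiLp.inner_apply, map_sum]
  refine Finset.sum_congr rfl fun i _ => ?_
  rw [repr_map_of_apply_eq_smul hb, inner_apply', mul_left_comm, RCLike.conj_mul, ← ofReal_pow,
    ← ofReal_mul, ofReal_re]

lemma repr_eq_zero_of_mem_span_image {s : Set ι} {x : E} (hx : x ∈ Submodule.span 𝕜 (b '' s))
    {i : ι} (hi : i ∉ s) : b.repr x i = 0 := by
  rw [← b.coe_toBasis, Basis.mem_span_image] at hx
  rw [← b.coe_toBasis_repr_apply]
  by_contra h
  exact hi (hx (Finsupp.mem_support_iff.2 h))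

lemma finrank_span_image (s : Finset ι) : finrank 𝕜 (Submodule.span 𝕜 (b '' s)) = #s := by
  have hli : LinearIndependent 𝕜 (b ∘ ((↑) : s → ι)) :=
    b.orthonormal.linearIndependent.comp _ Subtype.val_injective
  have hrange : Set.range (b ∘ ((↑) : s → ι)) = b '' s := by
    rw [Set.range_comp, Subtype.range_coe]
  rw [← Fintype.card_coe s, ← finrank_span_eq_card hli, hrange]

lemma finrank_le_card_pos_of_re_inner_pos (hb : ∀ i, T (b i) = (μ i : 𝕜) • b i)
    (V : Submodule 𝕜 E) (hV : ∀ x ∈ V, x ≠ 0 → 0 < re (inner 𝕜 x (T x))) :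
    finrank 𝕜 V ≤ #{i | 0 < μ i} := by
  have := Module.Finite.of_basis b.toBasis
  set W := Submodule.span 𝕜 (b '' ↑({i | ¬0 < μ i} : Finset ι))
  have hW : ∀ x ∈ W, re (inner 𝕜 x (T x)) ≤ 0 := fun x hx => by
    rw [re_inner_map_self_eq_sum hb]
    refine Finset.sum_nonpos fun i _ => ?_
    by_cases hi : 0 < μ i
    · simp [repr_eq_zero_of_mem_span_image hx (by simpa using hi)]
    · exact mul_nonpos_of_nonpos_of_nonneg (not_lt.1 hi) (sq_nonneg _)
  have hdisj : Disjoint V W := Submodule.disjoint_def.2 fun x hxV hxW => by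
    by_contra hx
    exact (hV x hxV hx).not_ge (hW x hxW)
  have hdim := Submodule.finrank_add_finrank_le_of_disjoint hdisj
  rw [finrank_span_image, finrank_eq_card_basis b.toBasis] at hdim
  have hcard := card_filter_add_card_filter_not (s := univ) (fun i => 0 < μ i)
  rw [card_univ] at hcard
  omega

lemma exists_pos_mul_norm_sq_le_re_inner (hb : ∀ i, T (b i) = (μ i : 𝕜) • b i) :
    ∃ c > 0, ∀ x ∈ Submodule.span 𝕜 (b '' ↑({i | 0 < μ i} : Finset ι)),
      c * ‖x‖ ^ 2 ≤ re (inner 𝕜 x (T x)) := by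
  have hc : ∀ᶠ c in 𝓝[>] (0 : ℝ), ∀ i, 0 < μ i → c ≤ μ i :=
    eventually_all.2 fun i => eventually_imp_distrib_left.2 fun hi =>
      nhdsWithin_le_nhds (eventually_le_nhds hi)
  obtain ⟨c, hcμ, hc0⟩ := (hc.and self_mem_nhdsWithin).exists
  refine ⟨c, hc0, fun x hx => ?_⟩
  rw [re_inner_map_self_eq_sum hb, ← b.repr.norm_map, EuclideanSpace.norm_sq_eq, Finset.mul_sum]
  refine Finset.sum_le_sum fun i _ => ?_
  by_cases hi : 0 < μ i
  · exact mul_le_mul_of_nonneg_right (hcμ i hi) (sq_nonneg _)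
  · simp [repr_eq_zero_of_mem_span_image hx (by simpa using hi)]

lemma card_pos_le_of_apply_eq_smul {ι' : Type*} [Fintype ι'] {b' : OrthonormalBasis ι' 𝕜 E}
    {μ' : ι' → ℝ} (hb : ∀ i, T (b i) = (μ i : 𝕜) • b i) (hb' : ∀ i, T (b' i) = (μ' i : 𝕜) • b' i) :
    #{i | 0 < μ i} ≤ #{i | 0 < μ' i} := by
  obtain ⟨c, hc, hle⟩ := exists_pos_mul_norm_sq_le_re_inner hb
  rw [← finrank_span_image (b := b)]
  exact finrank_le_card_pos_of_re_inner_pos hb' _ fun x hx hx0 =>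
    (mul_pos hc (pow_pos (norm_pos_iff.2 hx0) 2)).trans_le (hle x hx)

end OrthonormalBasis

namespace Matrix

section RCLike

variable {𝕜 ι : Type*} [RCLike 𝕜] [DecidableEq ι]

lemma isHermitian_diagonal_ofReal (d : ι → ℝ) : (diagonal fun i => (d i : 𝕜)).IsHermitian :=
  isHermitian_diagonal_iff.2 fun i => by simp [IsSelfAdjoint]

variable [Fintype ι]

lemma rank_diagonal_ofReal (d : ι → ℝ) : (diagonal fun i => (d i : 𝕜)).rank = #{i | d i ≠ 0} := by
  classical
  rw [rank_diagonal, Fintype.card_subtype]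
  simp

lemma continuous_toEuclideanCLM : Continuous (toEuclideanCLM (n := ι) (𝕜 := 𝕜)) :=
  LinearMap.continuous_of_finiteDimensional
    (toEuclideanCLM (n := ι) (𝕜 := 𝕜)).toAlgEquiv.toLinearMap

def hermitianOfRank (r : ℕ) : Set (Matrix ι ι 𝕜) := {M | M.IsHermitian ∧ M.rank = r}

lemma diagonal_ofReal_mem_hermitianOfRank (d : ι → ℝ) :
    (diagonal fun i => (d i : 𝕜)) ∈ hermitianOfRank #{i | d i ≠ 0} :=
  ⟨isHermitian_diagonal_ofReal d, rank_diagonal_ofReal d⟩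

lemma mul_mul_conjTranspose_mem_hermitianOfRank {r : ℕ} {D G : Matrix ι ι 𝕜}
    (hD : D ∈ hermitianOfRank r) (hG : IsUnit G.det) : G * D * Gᴴ ∈ hermitianOfRank r := by
  refine ⟨isHermitian_mul_mul_conjTranspose G hD.1, ?_⟩
  rw [rank_mul_eq_left_of_isUnit_det _ _ (by simpa [det_conjTranspose] using hG.star),
    rank_mul_eq_right_of_isUnit_det _ _ hG, hD.2]

lemma permMatrix_mul_diagonal_mul_conjTranspose (σ : Equiv.Perm ι) (d : ι → 𝕜) :
    σ.permMatrix 𝕜 * diagonal d * (σ.permMatrix 𝕜)ᴴ = diagonal (d ∘ σ) := by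
  rw [conjTranspose_permMatrix, PEquiv.toMatrix_toPEquiv_mul, PEquiv.mul_toMatrix_toPEquiv]
  ext i j
  simp [diagonal_apply, Equiv.Perm.inv_def]

lemma isUnit_det_permMatrix (σ : Equiv.Perm ι) : IsUnit (σ.permMatrix 𝕜).det := by
  rw [det_permutation]
  exact (Equiv.Perm.sign σ).isUnit.map (Int.castRingHom 𝕜)

lemma joinedIn_diagonal_ofReal_of_sign_eq {d e : ι → ℝ}
    (h : ∀ i, SignType.sign (d i) = SignType.sign (e i)) :
    JoinedIn (hermitianOfRank #{i | d i ≠ 0}) (diagonal fun i => (d i : 𝕜))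
      (diagonal fun i => (e i : 𝕜)) := by
  set C : Set (ι → ℝ) := Set.univ.pi fun i => {x | SignType.sign x = SignType.sign (d i)}
  have hC : Convex ℝ C := convex_pi fun i _ => convex_setOf_sign_eq _
  have hdC : d ∈ C := fun i _ => rfl
  have heC : e ∈ C := fun i _ => (h i).symm
  refine (JoinedIn.of_segment_subset (hC.segment_subset hdC heC)).map
    (f := fun d => diagonal fun i => (d i : 𝕜)) (by fun_prop) |>.mono ?_
  rintro _ ⟨d', hd', rfl⟩
  have hzero : #{i | d' i ≠ 0} = #{i | d i ≠ 0} := congrArg card <| filter_congr fun i _ => by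
    rw [ne_eq, ne_eq, ← sign_eq_zero_iff, ← sign_eq_zero_iff (a := d i), hd' i trivial]
  exact hzero ▸ diagonal_ofReal_mem_hermitianOfRank d'

namespace IsHermitian

variable {A B : Matrix ι ι 𝕜}

lemma toEuclideanLin_eigenvectorBasis (hA : A.IsHermitian) (i : ι) :
    toEuclideanLin A (hA.eigenvectorBasis i) = (hA.eigenvalues i : 𝕜) • hA.eigenvectorBasis i := by
  ext j
  have := congrFun (hA.mulVec_eigenvectorBasis i) j
  simp only [Pi.smul_apply] at this
  simp only [toLpLin_apply, PiLp.smul_apply, this, RCLike.real_smul_eq_coe_smul (K := 𝕜)]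

lemma card_pos_eigenvalues_eq_of_apply_eq_smul (hA : A.IsHermitian) {ι' : Type*} [Fintype ι']
    {b : OrthonormalBasis ι' 𝕜 (EuclideanSpace 𝕜 ι)} {μ : ι' → ℝ}
    (hb : ∀ i, toEuclideanLin A (b i) = (μ i : 𝕜) • b i) :
    #{i | 0 < μ i} = #{i | 0 < hA.eigenvalues i} :=
  (OrthonormalBasis.card_pos_le_of_apply_eq_smul hb hA.toEuclideanLin_eigenvectorBasis).antisymm
    (OrthonormalBasis.card_pos_le_of_apply_eq_smul hA.toEuclideanLin_eigenvectorBasis hb)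

lemma card_neg_eigenvalues_eq_card_pos_eigenvalues_neg (hA : A.IsHermitian) :
    #{i | hA.eigenvalues i < 0} = #{i | 0 < hA.neg.eigenvalues i} := by
  rw [← hA.neg.card_pos_eigenvalues_eq_of_apply_eq_smul (b := hA.eigenvectorBasis)
    (μ := -hA.eigenvalues) fun i => by simp [hA.toEuclideanLin_eigenvectorBasis]]
  simp

lemma card_eigenvalues_ne_zero (hA : A.IsHermitian) : #{i | hA.eigenvalues i ≠ 0} = A.rank := by
  rw [hA.rank_eq_card_non_zero_eigs, Fintype.card_subtype]

lemma card_pos_add_card_neg_eigenvalues (hA : A.IsHermitian) :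
    #{i | 0 < hA.eigenvalues i} + #{i | hA.eigenvalues i < 0} = A.rank := by
  rw [← hA.card_eigenvalues_ne_zero, ← card_union_of_disjoint
    (disjoint_filter.2 fun i _ hpos hneg => hpos.not_gt hneg), ← filter_or]
  simp only [ne_iff_lt_or_gt, or_comm]

-- `re ⟪x, A' x⟫` stays positive on the span of the positive eigenvectors of `A` for `A'` near `A`.
lemma eventually_card_pos_eigenvalues_le (hA : A.IsHermitian) :
    ∀ᶠ A' in 𝓝 A, ∀ hA' : A'.IsHermitian,
      #{i | 0 < hA.eigenvalues i} ≤ #{i | 0 < hA'.eigenvalues i} := by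
  obtain ⟨c, hc, hle⟩ :=
    OrthonormalBasis.exists_pos_mul_norm_sq_le_re_inner hA.toEuclideanLin_eigenvectorBasis
  set D : Matrix ι ι 𝕜 → EuclideanSpace 𝕜 ι →L[𝕜] EuclideanSpace 𝕜 ι :=
    fun A' => toEuclideanCLM (n := ι) (𝕜 := 𝕜) (A' - A)
  have hDcont : Continuous D := continuous_toEuclideanCLM.comp (continuous_id.sub continuous_const)
  have hnear : ∀ᶠ A' in 𝓝 A, ‖D A'‖ < c :=
    hDcont.norm.continuousAt.eventually_lt continuousAt_const (by simpa [D] using hc)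
  filter_upwards [hnear] with A' hA'near hA'
  rw [← OrthonormalBasis.finrank_span_image (b := hA.eigenvectorBasis)]
  refine OrthonormalBasis.finrank_le_card_pos_of_re_inner_pos
    hA'.toEuclideanLin_eigenvectorBasis _ fun x hx hx0 => ?_
  have hsplit : re (inner 𝕜 x (toEuclideanLin A' x))
      = re (inner 𝕜 x (toEuclideanLin A x)) + re (inner 𝕜 x (D A' x)) := by
    simp [D, ← coe_toEuclideanCLM_eq_toEuclideanLin, map_sub, inner_sub_right]
  have hD : -(‖D A'‖ * ‖x‖ ^ 2) ≤ re (inner 𝕜 x (D A' x)) := by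
    refine neg_le_of_abs_le ((abs_re_le_norm _).trans ((norm_inner_le_norm _ _).trans ?_))
    nlinarith [(D A').le_opNorm x, norm_nonneg x]
  nlinarith [hle x hx, pow_pos (norm_pos_iff.2 hx0) 2]

lemma eventually_card_neg_eigenvalues_le (hA : A.IsHermitian) :
    ∀ᶠ A' in 𝓝 A, ∀ hA' : A'.IsHermitian,
      #{i | hA.eigenvalues i < 0} ≤ #{i | hA'.eigenvalues i < 0} := by
  filter_upwards [(continuous_neg.tendsto A).eventually hA.neg.eventually_card_pos_eigenvalues_le]
    with A' hA'neg hA'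
  simpa only [card_neg_eigenvalues_eq_card_pos_eigenvalues_neg] using hA'neg hA'.neg

lemma eventually_card_pos_eigenvalues_eq_of_rank_eq (hA : A.IsHermitian) :
    ∀ᶠ A' in 𝓝 A, ∀ hA' : A'.IsHermitian, A'.rank = A.rank →
      #{i | 0 < hA'.eigenvalues i} = #{i | 0 < hA.eigenvalues i} := by
  filter_upwards [hA.eventually_card_pos_eigenvalues_le, hA.eventually_card_neg_eigenvalues_le]
    with A' hpos hneg hA' hrank
  have := hA.card_pos_add_card_neg_eigenvalues
  have := hA'.card_pos_add_card_neg_eigenvalues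
  have := hpos hA'
  have := hneg hA'
  omega

lemma card_pos_eigenvalues_eq_of_joinedIn {r : ℕ} (hA : A.IsHermitian) (hB : B.IsHermitian)
    (h : JoinedIn (hermitianOfRank r) A B) :
    #{i | 0 < hA.eigenvalues i} = #{i | 0 < hB.eigenvalues i} := by
  obtain ⟨⟨⟨γ, hγc⟩, rfl, rfl⟩, hγ⟩ := h
  let f : unitInterval → ℕ := fun t => #{i | 0 < (hγ t).1.eigenvalues i}
  have hf : IsLocallyConstant f := (IsLocallyConstant.iff_eventually_eq f).2 fun t => by
    filter_upwards [hγc.continuousAt.eventually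
      (hγ t).1.eventually_card_pos_eigenvalues_eq_of_rank_eq] with s hs
    exact hs (hγ s).1 ((hγ s).2.trans (hγ t).2.symm)
  exact hf.apply_eq_of_preconnectedSpace 0 1

lemma exists_perm_sign_eigenvalues (hA : A.IsHermitian) (hB : B.IsHermitian)
    (hrank : A.rank = B.rank) (hpos : #{i | 0 < hA.eigenvalues i} = #{i | 0 < hB.eigenvalues i}) :
    ∃ σ : Equiv.Perm ι, ∀ i,
      SignType.sign (hB.eigenvalues (σ i)) = SignType.sign (hA.eigenvalues i) := by
  have hneg : #{i | hA.eigenvalues i < 0} = #{i | hB.eigenvalues i < 0} := by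
    have := hA.card_pos_add_card_neg_eigenvalues
    have := hB.card_pos_add_card_neg_eigenvalues
    omega
  have hzero : #{i | hA.eigenvalues i = 0} = #{i | hB.eigenvalues i = 0} := by
    have := card_filter_add_card_filter_not (s := univ) fun i => hA.eigenvalues i = 0
    have := card_filter_add_card_filter_not (s := univ) fun i => hB.eigenvalues i = 0
    have := hA.card_eigenvalues_ne_zero
    have := hB.card_eigenvalues_ne_zero
    simp only [ne_eq] at *
    omega
  let e (s : SignType) : {i // SignType.sign (hA.eigenvalues i) = s}
      ≃ {i // SignType.sign (hB.eigenvalues i) = s} := Fintype.equivOfCardEq <| by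
    simp only [Fintype.card_subtype]
    cases s <;> simpa only [SignType.zero_eq_zero, SignType.neg_eq_neg_one, SignType.pos_eq_one,
      sign_eq_zero_iff, sign_eq_neg_one_iff, sign_eq_one_iff]
  exact ⟨Equiv.ofFiberEquiv e, Equiv.ofFiberEquiv_map e⟩

end IsHermitian

lemma card_pos_eigenvalues_diagonal_ofReal (d : ι → ℝ) :
    #{i | 0 < (isHermitian_diagonal_ofReal (𝕜 := 𝕜) d).eigenvalues i} = #{i | 0 < d i} := by
  refine ((isHermitian_diagonal_ofReal d).card_pos_eigenvalues_eq_of_apply_eq_smul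
    (b := EuclideanSpace.basisFun ι 𝕜) fun i => ?_).symm
  ext j
  simp [toLpLin_apply, Algebra.smul_def]

lemma exists_isHermitian_rank_card_pos_eigenvalues {p r : ℕ} (hpr : p ≤ r)
    (hr : r ≤ Fintype.card ι) : ∃ (A : Matrix ι ι 𝕜) (hA : A.IsHermitian),
      A.rank = r ∧ #{i | 0 < hA.eigenvalues i} = p := by
  obtain ⟨t, -, rfl⟩ := exists_subset_card_eq (s := (univ : Finset ι)) (by simpa using hr)
  obtain ⟨s, hst, rfl⟩ := exists_subset_card_eq hpr
  let d : ι → ℝ := fun i => if i ∈ s then 1 else if i ∈ t then -1 else 0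
  refine ⟨_, isHermitian_diagonal_ofReal d, ?_, ?_⟩
  · rw [rank_diagonal_ofReal]
    congr 1
    ext i
    by_cases his : i ∈ s
    · simp [d, his, hst his]
    · by_cases hit : i ∈ t <;> simp [d, his, hit]
  · rw [card_pos_eigenvalues_diagonal_ofReal]
    congr 1
    ext i
    by_cases his : i ∈ s
    · simp [d, his]
    · by_cases hit : i ∈ t <;> simp [d, his, hit]

end RCLike

section Complex

variable {ι : Type*} [Fintype ι] [DecidableEq ι]

-- `z ↦ det (1 + z • (G - 1))` is a polynomial that does not vanish at `0` and `1`, so its finitely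
-- many roots can be avoided by a path from `0` to `1` in `ℂ`.
lemma joinedIn_one_of_isUnit_det_s3 {G : Matrix ι ι ℂ} (hG : IsUnit G.det) :
    JoinedIn {M : Matrix ι ι ℂ | IsUnit M.det} 1 G := by
  set g : ℂ → Matrix ι ι ℂ := fun z => 1 + z • (G - 1)
  set q : Polynomial ℂ := det (1 + (Polynomial.X : Polynomial ℂ) • (G - 1).map Polynomial.C)
  have hq : ∀ z, q.eval z = (g z).det := fun z => by
    rw [← Polynomial.coe_evalRingHom, RingHom.map_det]
    congr 1
    ext i j
    by_cases h : i = j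
    · simp [g, h]
    · simp [g, h]
      ring
  have hq0 : q ≠ 0 := fun h => by simpa [g, h] using hq 0
  have hroots : JoinedIn {z | q.IsRoot z}ᶜ 0 1 :=
    ((Polynomial.finite_setOfPred_isRoot hq0).countable.isPathConnected_compl_of_one_lt_rank
      (by simp [Complex.rank_real_complex])).joinedIn 0 (by simp [Polynomial.IsRoot, hq, g]) 1
      (by simpa [Polynomial.IsRoot, hq, g] using hG.ne_zero)
  have hg : Continuous g := by fun_prop
  simpa [g] using (hroots.map hg).mono (V := {M : Matrix ι ι ℂ | IsUnit M.det})
    (Set.image_subset_iff.2 fun z hz => isUnit_iff_ne_zero.2 ((hq z).symm.trans_ne hz))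

lemma joinedIn_mul_mul_conjTranspose {r : ℕ} {D G : Matrix ι ι ℂ} (hD : D ∈ hermitianOfRank r)
    (hG : IsUnit G.det) : JoinedIn (hermitianOfRank r) D (G * D * Gᴴ) := by
  have hcont : Continuous fun M : Matrix ι ι ℂ => M * D * Mᴴ :=
    (continuous_id.matrix_mul continuous_const).matrix_mul continuous_id.matrix_conjTranspose
  simpa using ((joinedIn_one_of_isUnit_det_s3 hG).map hcont).mono (V := hermitianOfRank r)
    (Set.image_subset_iff.2 fun M hM => mul_mul_conjTranspose_mem_hermitianOfRank hD hM)

namespace IsHermitian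

variable {A B : Matrix ι ι ℂ}

lemma joinedIn_diagonal_eigenvalues (hA : A.IsHermitian) :
    JoinedIn (hermitianOfRank A.rank) (diagonal fun i => (hA.eigenvalues i : ℂ)) A := by
  have hD := diagonal_ofReal_mem_hermitianOfRank (𝕜 := ℂ) hA.eigenvalues
  rw [hA.card_eigenvalues_ne_zero] at hD
  have hspec := hA.spectral_theorem
  rw [Unitary.conjStarAlgAut_apply, star_eq_conjTranspose] at hspec
  convert joinedIn_mul_mul_conjTranspose hD (UnitaryGroup.det_isUnit hA.eigenvectorUnitary) using 1
  exacts [rfl, hspec]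

lemma joinedIn_of_card_pos_eigenvalues_eq (hA : A.IsHermitian) (hB : B.IsHermitian)
    (hrank : A.rank = B.rank) (hpos : #{i | 0 < hA.eigenvalues i} = #{i | 0 < hB.eigenvalues i}) :
    JoinedIn (hermitianOfRank A.rank) A B := by
  obtain ⟨σ, hσ⟩ := exists_perm_sign_eigenvalues hA hB hrank hpos
  have hAD := hA.joinedIn_diagonal_eigenvalues
  have hBD := hB.joinedIn_diagonal_eigenvalues
  rw [← hrank] at hBD
  have hsign := joinedIn_diagonal_ofReal_of_sign_eq (𝕜 := ℂ) fun i => (hσ i).symm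
  rw [hA.card_eigenvalues_ne_zero] at hsign
  have hperm := joinedIn_mul_mul_conjTranspose hBD.source_mem (isUnit_det_permMatrix σ)
  rw [permMatrix_mul_diagonal_mul_conjTranspose] at hperm
  exact hAD.symm.trans (hsign.trans (hperm.symm.trans hBD))

end IsHermitian

end Complex

end Matrix

theorem stmt3 (n r : ℕ) (hr : r ≤ n) :
    (∀ (A B : Matrix (Fin n) (Fin n) ℂ) (hA : A.IsHermitian) (hB : B.IsHermitian),
        A.rank = r → B.rank = r →
        ((Finset.univ.filter fun i => 0 < hA.eigenvalues i).card =
            (Finset.univ.filter fun i => 0 < hB.eigenvalues i).card ↔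
          JoinedIn {M : Matrix (Fin n) (Fin n) ℂ | M.IsHermitian ∧ M.rank = r} A B)) ∧
    (∀ p : ℕ, p ≤ r → ∃ (A : Matrix (Fin n) (Fin n) ℂ) (hA : A.IsHermitian),
        A.rank = r ∧ (Finset.univ.filter fun i => 0 < hA.eigenvalues i).card = p) := by
  refine ⟨fun A B hA hB hAr hBr => ⟨fun hpos => ?_, hA.card_pos_eigenvalues_eq_of_joinedIn hB⟩,
    fun p hp => Matrix.exists_isHermitian_rank_card_pos_eigenvalues hp (by simpa using hr)⟩
  subst hAr
  exact hA.joinedIn_of_card_pos_eigenvalues_eq hB hBr.symm hpos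
end

section
/- Let f : ℝ^d → ℝ be twice continuously differentiable, and suppose its gradient ∇f is L-Lipschitz. Fix a step size α with 0 < α < 1/L and define the gradient descent map φ(x) = x − α∇f(x). Let S be a countable set of critical points of f such that at every p ∈ S the Hessian ∇²f(p) (the second derivative, a symmetric bilinear form) is invertible and possesses at least one direction v with ⟨∇²f(p)v, v⟩ < 0. Then the set of initial points x₀ ∈ ℝ^d for which the iterates φ^n(x₀) converge (as n → ∞) to some point of S has Lebesgue measure zero. -/
/-!
Near a point `p` where the Hessian `H` has a negative direction, the step map `φ = id - α ∇f`
is approximated by `A = 1 - α H`, a symmetric map with an eigenvalue `1 - α λ > 1`. In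
eigencoordinates, split `z` into its part `z_u` along the eigenvalues of modulus `> 1` and the
rest `z_s`: maps close to `A` send the cone `‖z_s‖ ≤ ‖z_u‖` into itself and expand `‖z_u‖`
geometrically inside it. Hence two orbits that stay in a small ball around `p` never differ by a
vector of the cone, so the set of such points is the graph of a Lipschitz function of `z_s` and
has Hausdorff dimension `< d`. Since `α L < 1`, `φ` is antilipschitz, so the preimages of that
set under the iterates of `φ`, which cover all orbits converging to `p`, also have dimension
`< d`, hence Lebesgue measure zero.
-/

open MeasureTheory Filter Set Module
open scoped NNReal Topology

theorem MeasureTheory.Measure.addHaar_eq_zero_of_dimH_lt {E : Type*} [NormedAddCommGroup E]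
    [NormedSpace ℝ E] [FiniteDimensional ℝ E] [MeasurableSpace E] [BorelSpace E]
    (μ : Measure E) [μ.IsAddHaarMeasure] {s : Set E} (hs : dimH s < finrank ℝ E) : μ s = 0 := by
  refine measure_zero_of_dimH_lt (d := finrank ℝ E) ?_ (mod_cast hs)
  rw [μ.isAddLeftInvariant_eq_smul μH[finrank ℝ E]]
  exact Measure.AbsolutelyContinuous.rfl.smul_left _

theorem dimH_le_finrank_of_antilipschitzWith_domRestrict {X F : Type*} [EMetricSpace X]
    [NormedAddCommGroup F] [NormedSpace ℝ F] [FiniteDimensional ℝ F] {K : ℝ≥0} {P : X → F}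
    {s : Set X} (hP : AntilipschitzWith K (s.domRestrict P)) : dimH s ≤ finrank ℝ F :=
  calc dimH s = dimH (univ : Set s) := by
        rw [← (isometry_subtype_coe (s := s)).dimH_image, image_univ, Subtype.range_coe]
    _ ≤ dimH (univ : Set F) :=
        (hP.le_dimH_image univ).trans (dimH_mono (subset_univ _))
    _ = finrank ℝ F := Real.dimH_univ_eq_finrank F

protected theorem AntilipschitzWith.iterate {X : Type*} [PseudoEMetricSpace X] {K : ℝ≥0}
    {f : X → X} (hf : AntilipschitzWith K f) : ∀ n, AntilipschitzWith (K ^ n) f^[n]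
  | 0 => by simpa using AntilipschitzWith.id
  | n + 1 => by rw [pow_succ']; exact (hf.iterate n).comp hf

theorem LipschitzWith.antilipschitzWith_id_sub {E : Type*} [SeminormedAddCommGroup E] {g : E → E}
    {K : ℝ≥0} (hg : LipschitzWith K g) (hK : K < 1) :
    AntilipschitzWith (1 - K)⁻¹ fun x => x - g x := by
  have hg' : LipschitzWith K ((fun x => x - g x) - id) := by
    convert hg.neg using 1
    ext x
    simp
  simpa using AntilipschitzWith.id.add_sub_lipschitzWith hg' (by simpa using hK)

def stableSet {X : Type*} [TopologicalSpace X] (Φ : X → X) (p : X) : Set X :=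
  {x | Tendsto (fun n => Φ^[n] x) atTop (𝓝 p)}

theorem stableSet_subset_iUnion_preimage {X : Type*} [TopologicalSpace X] {Φ : X → X} {p : X}
    {U : Set X} (hU : U ∈ 𝓝 p) : stableSet Φ p ⊆ ⋃ n, Φ^[n] ⁻¹' {x | ∀ k, Φ^[k] x ∈ U} := by
  intro x hx
  obtain ⟨n, hn⟩ := eventually_atTop.mp (hx hU)
  exact mem_iUnion.mpr ⟨n, fun k => by
    rw [← Function.iterate_add_apply]; exact hn (k + n) (Nat.le_add_left n k)⟩

section

variable {E F G : Type*} [NormedAddCommGroup E] [NormedSpace ℝ E] [NormedAddCommGroup F]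
  [NormedSpace ℝ F] [NormedAddCommGroup G] [NormedSpace ℝ G]

structure ExpansionSplitting (A : E →L[ℝ] E) (Pu : E →ₗ[ℝ] F) (Ps : E →ₗ[ℝ] G) (c : ℝ) :
    Prop where
  norm_unstable_le : ∀ z, ‖Pu z‖ ≤ ‖z‖
  norm_stable_le : ∀ z, ‖Ps z‖ ≤ ‖z‖
  norm_le_add : ∀ z, ‖z‖ ≤ ‖Pu z‖ + ‖Ps z‖
  expand : ∀ z, c * ‖Pu z‖ ≤ ‖Pu (A z)‖
  nonexpand : ∀ z, ‖Ps (A z)‖ ≤ ‖Ps z‖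

namespace ExpansionSplitting

variable {A : E →L[ℝ] E} {Pu : E →ₗ[ℝ] F} {Ps : E →ₗ[ℝ] G} {c ε : ℝ}

theorem cone_step (h : ExpansionSplitting A Pu Ps c) (hε₀ : 0 ≤ ε) (hε : 1 + 4 * ε ≤ c)
    {z w : E} (hw : ‖w - A z‖ ≤ ε * ‖z‖) (hz : ‖Ps z‖ ≤ ‖Pu z‖) :
    ‖Ps w‖ ≤ ‖Pu w‖ ∧ (c - 2 * ε) * ‖Pu z‖ ≤ ‖Pu w‖ := by
  have herr : ‖w - A z‖ ≤ 2 * ε * ‖Pu z‖ := by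
    nlinarith [h.norm_le_add z]
  have hw_eq : w = A z + (w - A z) := by abel
  have hu : (c - 2 * ε) * ‖Pu z‖ ≤ ‖Pu w‖ := by
    have := norm_sub_norm_le (Pu (A z)) (-Pu (w - A z))
    rw [sub_neg_eq_add, ← map_add, ← hw_eq, norm_neg] at this
    linarith [h.expand z, h.norm_unstable_le (w - A z)]
  have hs : ‖Ps w‖ ≤ ‖Ps z‖ + 2 * ε * ‖Pu z‖ := by
    rw [hw_eq, map_add]
    linarith [norm_add_le (Ps (A z)) (Ps (w - A z)), h.nonexpand z, h.norm_stable_le (w - A z)]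
  exact ⟨by nlinarith [norm_nonneg (Pu z)], hu⟩

theorem cone_iterate (h : ExpansionSplitting A Pu Ps c) (hε₀ : 0 ≤ ε) (hε : 1 + 4 * ε ≤ c)
    {Δ : ℕ → E} (hΔ : ∀ n, ‖Δ (n + 1) - A (Δ n)‖ ≤ ε * ‖Δ n‖) (h₀ : ‖Ps (Δ 0)‖ ≤ ‖Pu (Δ 0)‖) :
    ∀ n, ‖Ps (Δ n)‖ ≤ ‖Pu (Δ n)‖ ∧ (c - 2 * ε) ^ n * ‖Pu (Δ 0)‖ ≤ ‖Pu (Δ n)‖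
  | 0 => ⟨h₀, by simp⟩
  | n + 1 => by
    obtain ⟨hcone, hgrowth⟩ := h.cone_iterate hε₀ hε hΔ h₀ n
    obtain ⟨hcone', hstep⟩ := h.cone_step hε₀ hε (hΔ n) hcone
    refine ⟨hcone', le_trans ?_ hstep⟩
    rw [pow_succ', mul_assoc]
    exact mul_le_mul_of_nonneg_left hgrowth (by linarith)

theorem eq_zero_of_cone_of_bounded (h : ExpansionSplitting A Pu Ps c) (hε₀ : 0 ≤ ε)
    (hε : 1 + 4 * ε < c) {Δ : ℕ → E} (hΔ : ∀ n, ‖Δ (n + 1) - A (Δ n)‖ ≤ ε * ‖Δ n‖)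
    (h₀ : ‖Ps (Δ 0)‖ ≤ ‖Pu (Δ 0)‖) {C : ℝ} (hC : ∀ n, ‖Δ n‖ ≤ C) : Δ 0 = 0 := by
  have hu : ‖Pu (Δ 0)‖ = 0 := by
    by_contra hne
    have hpos := (norm_nonneg _).lt_of_ne' hne
    obtain ⟨n, hn⟩ := pow_unbounded_of_one_lt (C / ‖Pu (Δ 0)‖) (by linarith : 1 < c - 2 * ε)
    rw [div_lt_iff₀ hpos] at hn
    linarith [(h.cone_iterate hε₀ hε.le hΔ h₀ n).2, h.norm_unstable_le (Δ n), hC n]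
  have hs : ‖Ps (Δ 0)‖ = 0 := le_antisymm (hu ▸ h₀) (norm_nonneg _)
  exact norm_le_zero_iff.mp (by linarith [h.norm_le_add (Δ 0)])

theorem norm_sub_le_of_approximatesLinearOn (h : ExpansionSplitting A Pu Ps c) {Φ : E → E}
    {B : Set E} (hB : Bornology.IsBounded B) {ε : ℝ≥0} (hΦ : ApproximatesLinearOn Φ A B ε)
    (hε : 1 + 4 * (ε : ℝ) < c) {x y : E} (hx : ∀ n, Φ^[n] x ∈ B) (hy : ∀ n, Φ^[n] y ∈ B) :
    ‖x - y‖ ≤ 2 * ‖Ps (x - y)‖ := by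
  by_cases hcone : ‖Ps (x - y)‖ ≤ ‖Pu (x - y)‖
  · obtain ⟨C, hC⟩ := Metric.isBounded_iff.mp hB
    have hxy : x - y = 0 := by
      refine h.eq_zero_of_cone_of_bounded (Δ := fun n => Φ^[n] x - Φ^[n] y) ε.coe_nonneg hε
        (fun n => ?_) hcone (C := C) (fun n => ?_)
      · simpa only [Function.iterate_succ_apply'] using hΦ _ (hx n) _ (hy n)
      · simpa only [dist_eq_norm] using hC (hx n) (hy n)
    simp [hxy]
  · linarith [h.norm_le_add (x - y)]

theorem dimH_stableSet_le [FiniteDimensional ℝ G] (h : ExpansionSplitting A Pu Ps c)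
    (hc : 1 < c) {Φ : E → E} {K : ℝ≥0} (hΦ : AntilipschitzWith K Φ) {p : E}
    (hΦp : HasStrictFDerivAt Φ A p) : dimH (stableSet Φ p) ≤ finrank ℝ G := by
  set ε : ℝ≥0 := Real.toNNReal ((c - 1) / 8)
  have hε : 1 + 4 * (ε : ℝ) < c := by
    rw [Real.coe_toNNReal _ (by linarith)]; linarith
  obtain ⟨U, hU, hΦU⟩ := hΦp.approximates_deriv_on_nhds (c := ε) (Or.inr (by simpa [ε]))
  obtain ⟨r, hr, hrU⟩ := Metric.nhds_basis_closedBall.mem_iff.mp hU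
  set T := {x | ∀ k, Φ^[k] x ∈ Metric.closedBall p r}
  have hT : dimH T ≤ finrank ℝ G := by
    refine dimH_le_finrank_of_antilipschitzWith_domRestrict (P := Ps) (K := 2)
      (AntilipschitzWith.of_le_mul_dist fun x y => ?_)
    simpa [Subtype.dist_eq, dist_eq_norm, ← map_sub] using h.norm_sub_le_of_approximatesLinearOn
      Metric.isBounded_closedBall (hΦU.mono_set hrU) hε x.2 y.2
  calc dimH (stableSet Φ p) ≤ dimH (⋃ n, Φ^[n] ⁻¹' T) :=
        dimH_mono (stableSet_subset_iUnion_preimage (Metric.closedBall_mem_nhds p hr))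
    _ = ⨆ n, dimH (Φ^[n] ⁻¹' T) := dimH_iUnion _
    _ ≤ finrank ℝ G := iSup_le fun n => ((hΦ.iterate n).dimH_preimage_le T).trans hT

end ExpansionSplitting

end

namespace EuclideanSpace

variable {ι : Type*}

def restrictₗ (s : Finset ι) : EuclideanSpace ℝ ι →ₗ[ℝ] EuclideanSpace ℝ s where
  toFun x := WithLp.toLp 2 fun i => x i
  map_add' _ _ := rfl
  map_smul' _ _ := rfl

@[simp]
theorem restrictₗ_apply (s : Finset ι) (x : EuclideanSpace ℝ ι) (i : s) :
    restrictₗ s x i = x i := rfl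

theorem norm_sq_eq_restrictₗ_add_restrictₗ_compl [Fintype ι] [DecidableEq ι] (s : Finset ι)
    (x : EuclideanSpace ℝ ι) : ‖x‖ ^ 2 = ‖restrictₗ s x‖ ^ 2 + ‖restrictₗ sᶜ x‖ ^ 2 := by
  simp only [EuclideanSpace.norm_sq_eq, restrictₗ_apply]
  rw [Finset.sum_coe_sort s (fun i => ‖x i‖ ^ 2), Finset.sum_coe_sort sᶜ (fun i => ‖x i‖ ^ 2),
    Finset.sum_add_sum_compl]

theorem norm_le_norm_of_forall_abs_le [Fintype ι] {x y : EuclideanSpace ℝ ι}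
    (h : ∀ i, |x i| ≤ |y i|) : ‖x‖ ≤ ‖y‖ := by
  simp only [EuclideanSpace.norm_eq, Real.norm_eq_abs]
  exact Real.sqrt_le_sqrt (Finset.sum_le_sum fun i _ => sq_le_sq.mpr (by simpa using h i))

end EuclideanSpace

section InnerProductSpace

variable {E : Type*} [NormedAddCommGroup E] [InnerProductSpace ℝ E]

theorem OrthonormalBasis.expansionSplitting {ι : Type*} [Fintype ι] [DecidableEq ι]
    (b : OrthonormalBasis ι ℝ E) {A : E →L[ℝ] E} {a : ι → ℝ}
    (hA : ∀ z i, b.repr (A z) i = a i * b.repr z i) {s : Finset ι} {c : ℝ} (hc : 0 ≤ c)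
    (hs : ∀ i ∈ s, c ≤ |a i|) (hsc : ∀ i ∉ s, |a i| ≤ 1) :
    ExpansionSplitting A (EuclideanSpace.restrictₗ s ∘ₗ (b.repr : E →ₗ[ℝ] EuclideanSpace ℝ ι))
      (EuclideanSpace.restrictₗ sᶜ ∘ₗ (b.repr : E →ₗ[ℝ] EuclideanSpace ℝ ι)) c := by
  have hsplit (z : E) := EuclideanSpace.norm_sq_eq_restrictₗ_add_restrictₗ_compl s (b.repr z)
  simp only [LinearIsometryEquiv.norm_map] at hsplit
  refine ⟨fun z => ?_, fun z => ?_, fun z => ?_, fun z => ?_, fun z => ?_⟩ <;>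
    simp only [LinearMap.comp_apply, LinearEquiv.coe_coe, ContinuousLinearEquiv.coe_toLinearEquiv,
      LinearIsometryEquiv.coe_toContinuousLinearEquiv]
  · refine (sq_le_sq₀ (norm_nonneg _) (norm_nonneg _)).mp ?_
    nlinarith [hsplit z]
  · refine (sq_le_sq₀ (norm_nonneg _) (norm_nonneg _)).mp ?_
    nlinarith [hsplit z]
  · refine (sq_le_sq₀ (norm_nonneg _) (by positivity)).mp ?_
    nlinarith [hsplit z, norm_nonneg (EuclideanSpace.restrictₗ s (b.repr z)),
      norm_nonneg (EuclideanSpace.restrictₗ sᶜ (b.repr z))]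
  · rw [← Real.norm_of_nonneg hc, ← norm_smul]
    refine EuclideanSpace.norm_le_norm_of_forall_abs_le fun i => ?_
    simp only [PiLp.smul_apply, EuclideanSpace.restrictₗ_apply, hA, smul_eq_mul, abs_mul,
      abs_of_nonneg hc]
    exact mul_le_mul_of_nonneg_right (hs i i.2) (abs_nonneg _)
  · refine EuclideanSpace.norm_le_norm_of_forall_abs_le fun i => ?_
    simp only [EuclideanSpace.restrictₗ_apply, hA, abs_mul]
    exact mul_le_of_le_one_left (abs_nonneg _) (hsc i (Finset.mem_compl.mp i.2))

theorem norm_lt_norm_sub_smul_of_inner_neg {T : E →L[ℝ] E} {v : E} (hv : inner ℝ (T v) v < 0)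
    {α : ℝ} (hα : 0 < α) : ‖v‖ < ‖v - α • T v‖ := by
  have hv0 : v ≠ 0 := by rintro rfl; simp at hv
  have : ‖v‖ ^ 2 < ‖v - α • T v‖ * ‖v‖ := by
    calc ‖v‖ ^ 2 < inner ℝ (v - α • T v) v := by
          rw [inner_sub_left, inner_smul_left, real_inner_self_eq_norm_sq]
          simp only [conj_trivial]
          nlinarith
      _ ≤ ‖v - α • T v‖ * ‖v‖ := real_inner_le_norm _ _
  nlinarith [norm_pos_iff.mpr hv0]

variable [FiniteDimensional ℝ E]

theorem LinearMap.IsSymmetric.exists_one_lt_abs_eigenvalues {T : E →ₗ[ℝ] E} (hT : T.IsSymmetric)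
    {n : ℕ} (hn : finrank ℝ E = n) (hv : ∃ v, ‖v‖ < ‖T v‖) :
    ∃ i, 1 < |hT.eigenvalues hn i| := by
  by_contra! hle
  obtain ⟨v, hv⟩ := hv
  have : ‖T v‖ ≤ ‖v‖ := by
    rw [← (hT.eigenvectorBasis hn).repr.norm_map, ← (hT.eigenvectorBasis hn).repr.norm_map v]
    refine EuclideanSpace.norm_le_norm_of_forall_abs_le fun i => ?_
    rw [hT.eigenvectorBasis_apply_self_apply, abs_mul]
    exact mul_le_of_le_one_left (abs_nonneg _) (by simpa using hle i)
  linarith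

theorem MeasureTheory.Measure.addHaar_stableSet_eq_zero [MeasurableSpace E] [BorelSpace E]
    (μ : Measure E) [μ.IsAddHaarMeasure] {Φ : E → E} {K : ℝ≥0} (hΦ : AntilipschitzWith K Φ)
    {A : E →L[ℝ] E} {p : E} (hΦp : HasStrictFDerivAt Φ A p)
    (hA : (A : E →ₗ[ℝ] E).IsSymmetric) (hv : ∃ v, ‖v‖ < ‖A v‖) : μ (stableSet Φ p) = 0 := by
  classical
  set a := hA.eigenvalues rfl
  set s := Finset.univ.filter fun i => 1 < |a i|
  obtain ⟨i₀, hi₀⟩ := hA.exists_one_lt_abs_eigenvalues rfl hv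
  have hs : s.Nonempty := ⟨i₀, by simpa [s] using hi₀⟩
  set c := s.inf' hs fun i => |a i|
  have hc : 1 < c := (Finset.lt_inf'_iff hs).mpr fun i hi => (Finset.mem_filter.mp hi).2
  have hsplit := (hA.eigenvectorBasis rfl).expansionSplitting
    (fun z i => by simpa using hA.eigenvectorBasis_apply_self_apply rfl z i) (by linarith)
    (fun i hi => Finset.inf'_le (fun i => |a i|) hi) (fun i hi => by simpa [s] using hi)
  apply μ.addHaar_eq_zero_of_dimH_lt
  calc dimH (stableSet Φ p) ≤ finrank ℝ (EuclideanSpace ℝ ↥sᶜ) :=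
        hsplit.dimH_stableSet_le hc hΦ hΦp
    _ < finrank ℝ E := by
        rw [finrank_euclideanSpace, Fintype.card_coe, Finset.card_compl, Fintype.card_fin,
          Nat.cast_lt]
        exact Nat.sub_lt (Fintype.card_pos_iff.mpr ⟨i₀⟩ |>.trans_eq (Fintype.card_fin _))
          hs.card_pos

end InnerProductSpace

section Gradient

variable {E : Type*} [NormedAddCommGroup E] [InnerProductSpace ℝ E] [CompleteSpace E]
  {f : E → ℝ}

theorem ContDiffAt.gradient_right {m n : WithTop ℕ∞} {p : E} (hf : ContDiffAt ℝ n f p)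
    (hmn : m + 1 ≤ n) : ContDiffAt ℝ m (gradient f) p :=
  (InnerProductSpace.toDual ℝ E).symm.contDiff.contDiffAt.comp p (hf.fderiv_right hmn)

theorem ContDiffAt.isSymmetric_fderiv_gradient {p : E} (hf : ContDiffAt ℝ 2 f p) :
    (fderiv ℝ (gradient f) p : E →ₗ[ℝ] E).IsSymmetric := by
  let e : StrongDual ℝ E ≃ₗᵢ[ℝ] E := (InnerProductSpace.toDual ℝ E).symm
  have hH : fderiv ℝ (gradient f) p = (e : StrongDual ℝ E →L[ℝ] E).comp
      (fderiv ℝ (fderiv ℝ f) p) :=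
    e.comp_fderiv
  intro v w
  rw [ContinuousLinearMap.coe_coe, hH, real_inner_comm _ v]
  simp only [ContinuousLinearMap.comp_apply, LinearIsometryEquiv.coe_coe'']
  rw [InnerProductSpace.toDual_symm_apply, InnerProductSpace.toDual_symm_apply]
  exact hf.isSymmSndFDerivAt (by simp) v w

end Gradient

theorem MeasureTheory.Measure.addHaar_stableSet_gradientStep_eq_zero {E : Type*}
    [NormedAddCommGroup E] [InnerProductSpace ℝ E] [FiniteDimensional ℝ E] [MeasurableSpace E]
    [BorelSpace E] (μ : Measure E) [μ.IsAddHaarMeasure] {f : E → ℝ} {L : ℝ≥0} {α : ℝ} {p : E}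
    (hf : ContDiffAt ℝ 2 f p) (hLip : LipschitzWith L (gradient f)) (hα : 0 < α)
    (hαL : α * L < 1) (hneg : ∃ v, inner ℝ (fderiv ℝ (gradient f) p v) v < 0) :
    μ (stableSet (fun x => x - α • gradient f x) p) = 0 := by
  set H := fderiv ℝ (gradient f) p
  have hΦ := ((lipschitzWith_smul α).comp hLip).antilipschitzWith_id_sub
    (by rwa [← NNReal.coe_lt_coe, NNReal.coe_mul, coe_nnnorm, Real.norm_of_nonneg hα.le])
  have hΦp : HasStrictFDerivAt (fun x => x - α • gradient f x)
      (ContinuousLinearMap.id ℝ E - α • H) p :=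
    (hasStrictFDerivAt_id p).sub
      (((hf.gradient_right le_rfl).hasStrictFDerivAt one_ne_zero).const_smul α)
  refine μ.addHaar_stableSet_eq_zero hΦ hΦp (fun x y => ?_) ?_
  · have hH : inner ℝ (H x) y = inner ℝ x (H y) := hf.isSymmetric_fderiv_gradient x y
    simp [inner_sub_left, inner_sub_right, inner_smul_left, inner_smul_right, hH]
  · obtain ⟨v, hv⟩ := hneg
    exact ⟨v, by simpa using norm_lt_norm_sub_smul_of_inner_neg hv hα⟩

theorem stmt4_general (d : ℕ) (f : EuclideanSpace ℝ (Fin d) → ℝ) (L : NNReal) (α : ℝ)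
    (hf : ContDiff ℝ 2 f)
    (hLip : LipschitzWith L (gradient f))
    (hα : 0 < α) (hα' : α < 1 / (L : ℝ))
    (S : Set (EuclideanSpace ℝ (Fin d)))
    (hS : S.Countable)
    (hneg : ∀ p ∈ S, ∃ v, (inner ℝ (fderiv ℝ (gradient f) p v) v : ℝ) < 0) :
    volume {x₀ : EuclideanSpace ℝ (Fin d) | ∃ p ∈ S,
      Tendsto (fun k => (fun x => x - α • gradient f x)^[k] x₀) atTop (nhds p)} = 0 := by
  have hαL : α * L < 1 := by
    rcases L.coe_nonneg.eq_or_lt with hL | hL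
    · rw [← hL, mul_zero]; exact one_pos
    · exact (lt_div_iff₀ hL).mp hα'
  have hunion : {x₀ : EuclideanSpace ℝ (Fin d) | ∃ p ∈ S,
      Tendsto (fun k => (fun x => x - α • gradient f x)^[k] x₀) atTop (nhds p)} =
      ⋃ p ∈ S, stableSet (fun x => x - α • gradient f x) p := by
    ext; simp [stableSet]
  rw [hunion, measure_biUnion_null_iff hS]
  exact fun p hp =>
    volume.addHaar_stableSet_gradientStep_eq_zero hf.contDiffAt hLip hα hαL (hneg p hp)

theorem stmt4 (d : ℕ) (f : EuclideanSpace ℝ (Fin d) → ℝ) (L : NNReal) (α : ℝ)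
    (hf : ContDiff ℝ 2 f)
    (hLip : LipschitzWith L (gradient f))
    (hα : 0 < α) (hα' : α < 1 / (L : ℝ))
    (S : Set (EuclideanSpace ℝ (Fin d)))
    (hS : S.Countable)
    (hcrit : ∀ p ∈ S, gradient f p = 0)
    (hinv : ∀ p ∈ S, Function.Bijective (fderiv ℝ (gradient f) p))
    (hneg : ∀ p ∈ S, ∃ v, (inner ℝ (fderiv ℝ (gradient f) p v) v : ℝ) < 0) :
    volume {x₀ : EuclideanSpace ℝ (Fin d) | ∃ p ∈ S,
      Tendsto (fun k => (fun x => x - α • gradient f x)^[k] x₀) atTop (nhds p)} = 0 :=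
  stmt4_general d f L α hf hLip hα hα' S hS hneg
end

section
/- Let μ be the standard Gaussian measure on ℝ^n (the product of n one-dimensional standard Gaussians, i.e. each coordinate of a is i.i.d. N(0,1)). Then for all x, z ∈ ℝ^n, the expected phase-retrieval residual satisfies ∫ (⟨a, z⟩² − ⟨a, x⟩²)² dμ(a) = 3‖z‖⁴ + 3‖x‖⁴ − 2‖z‖²‖x‖² − 4⟨z, x⟩². -/
open MeasureTheory ProbabilityTheory Real
open scoped NNReal RealInnerProductSpace

/-!
Under the standard Gaussian measure every projection `a ↦ ⟪a, w⟫` has law `N(0, ‖w‖²)`, and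
Gaussian integration by parts, `E[X ^ (k + 2)] = (k + 1) v E[X ^ k]` for `X ~ N(0, v)`, gives its
fourth moment `3 ‖w‖ ^ 4`. Polarising the quartic form `w ↦ E⟪a, w⟫ ^ 4` yields
`E[⟪a, u⟫ ^ 2 ⟪a, v⟫ ^ 2] = ‖u‖ ^ 2 ‖v‖ ^ 2 + 2 ⟪u, v⟫ ^ 2`, and the integrand factors as
`⟪a, z - x⟫ ^ 2 ⟪a, z + x⟫ ^ 2`.
-/

namespace ProbabilityTheory

lemma hasDerivAt_gaussianPDFReal (μ : ℝ) (v : ℝ≥0) (x : ℝ) :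
    HasDerivAt (gaussianPDFReal μ v) (-((x - μ) / v) * gaussianPDFReal μ v x) x := by
  have h : HasDerivAt (fun y : ℝ => -(y - μ) ^ 2 / (2 * v)) (-((x - μ) / v)) x := by
    refine ((((hasDerivAt_id x).sub_const μ).pow 2).neg.div_const (2 * (v : ℝ))).congr_deriv ?_
    simp only [id, Nat.cast_ofNat, mul_one]
    ring
  rw [gaussianPDFReal_def]
  exact (h.exp.const_mul _).congr_deriv (by ring)

lemma integrable_pow_mul_gaussianPDFReal (k : ℕ) (v : ℝ≥0) :
    Integrable fun x => x ^ k * gaussianPDFReal 0 v x := by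
  rcases eq_or_ne v 0 with rfl | hv
  · simp
  have hb : 0 < ((2 * v : ℝ))⁻¹ := by positivity
  have := (integrable_rpow_mul_exp_neg_mul_sq hb (s := k)
    (neg_one_lt_zero.trans_le k.cast_nonneg)).const_mul (√(2 * π * v))⁻¹
  refine this.congr (ae_of_all _ fun x => ?_)
  simp only [rpow_natCast, gaussianPDFReal, sub_zero]
  ring_nf

lemma integral_pow_add_two_mul_gaussianPDFReal (k : ℕ) (v : ℝ≥0) :
    ∫ x, x ^ (k + 2) * gaussianPDFReal 0 v x =
      (k + 1) * v * ∫ x, x ^ k * gaussianPDFReal 0 v x := by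
  rcases eq_or_ne v 0 with rfl | hv
  · simp
  have hu'v (x : ℝ) : (k + 1 : ℝ) * x ^ k * gaussianPDFReal 0 v x =
      (k + 1 : ℝ) * (x ^ k * gaussianPDFReal 0 v x) := by ring
  have huv' (x : ℝ) : x ^ (k + 1) * (-(x / v) * gaussianPDFReal 0 v x) =
      -(v : ℝ)⁻¹ * (x ^ (k + 2) * gaussianPDFReal 0 v x) := by ring
  have hparts := integral_mul_deriv_eq_deriv_mul_of_integrable
    (u' := fun x => (k + 1 : ℝ) * x ^ k) (v' := fun x => -(x / v) * gaussianPDFReal 0 v x)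
    (fun x _ => by simpa using hasDerivAt_pow (k + 1) x)
    (fun x _ => by simpa only [sub_zero] using hasDerivAt_gaussianPDFReal 0 v x)
    (by simpa only [Pi.mul_def, huv'] using
      (integrable_pow_mul_gaussianPDFReal (k + 2) v).const_mul _)
    (by simpa only [Pi.mul_def, hu'v] using
      (integrable_pow_mul_gaussianPDFReal k v).const_mul _)
    (integrable_pow_mul_gaussianPDFReal (k + 1) v)
  simp only [huv', hu'v, integral_const_mul] at hparts
  field_simp at hparts
  linarith

lemma integral_pow_add_two_gaussianReal (k : ℕ) (v : ℝ≥0) :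
    ∫ x, x ^ (k + 2) ∂gaussianReal 0 v = (k + 1) * v * ∫ x, x ^ k ∂gaussianReal 0 v := by
  rcases eq_or_ne v 0 with rfl | hv
  · simp [gaussianReal_zero_var]
  simp only [integral_gaussianReal_eq_integral_smul hv, smul_eq_mul,
    mul_comm (gaussianPDFReal 0 v _)]
  exact integral_pow_add_two_mul_gaussianPDFReal k v

lemma integral_pow_four_gaussianReal (v : ℝ≥0) :
    ∫ x, x ^ 4 ∂gaussianReal 0 v = 3 * v ^ 2 := by
  rw [integral_pow_add_two_gaussianReal 2, integral_pow_add_two_gaussianReal 0]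
  simp only [pow_zero, integral_const, probReal_univ, smul_eq_mul, mul_one]
  push_cast
  ring

section stdGaussian

variable {E : Type*} [NormedAddCommGroup E] [InnerProductSpace ℝ E] [FiniteDimensional ℝ E]
  [MeasurableSpace E] [BorelSpace E]

lemma map_inner_stdGaussian (w : E) :
    (stdGaussian E).map (fun a => ⟪a, w⟫) = gaussianReal 0 (‖w‖₊ ^ 2) := by
  have h := IsGaussian.map_eq_gaussianReal (μ := stdGaussian E) (innerSL ℝ w)
  rw [integral_strongDual_stdGaussian, variance_dual_stdGaussian, innerSL_apply_norm] at h
  convert h using 2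
  · ext a
    simp [real_inner_comm]
  · ext
    simp

lemma integrable_inner_pow_four_stdGaussian (w : E) :
    Integrable (fun a => ⟪a, w⟫ ^ 4) (stdGaussian E) := by
  have := (IsGaussian.memLp_dual (stdGaussian E) (innerSL ℝ w) 4 (by simp)).integrable_norm_pow
    (p := 4) (by norm_num)
  simpa [real_inner_comm, Even.pow_abs (by decide : Even 4)] using this

lemma integral_inner_pow_four_stdGaussian (w : E) :
    ∫ a, ⟪a, w⟫ ^ 4 ∂stdGaussian E = 3 * ‖w‖ ^ 4 := by
  rw [← integral_map (f := fun x : ℝ => x ^ 4) (by fun_prop) (by fun_prop), map_inner_stdGaussian,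
    integral_pow_four_gaussianReal]
  push_cast
  ring

lemma integral_sq_inner_mul_sq_inner_stdGaussian (u v : E) :
    ∫ a, ⟪a, u⟫ ^ 2 * ⟪a, v⟫ ^ 2 ∂stdGaussian E = ‖u‖ ^ 2 * ‖v‖ ^ 2 + 2 * ⟪u, v⟫ ^ 2 := by
  have polarization (a : E) : ⟪a, u⟫ ^ 2 * ⟪a, v⟫ ^ 2 =
      (⟪a, u + v⟫ ^ 4 + ⟪a, u - v⟫ ^ 4 - 2 * ⟪a, u⟫ ^ 4 - 2 * ⟪a, v⟫ ^ 4) / 12 := by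
    rw [inner_add_right, inner_sub_right]
    ring
  have hI := integrable_inner_pow_four_stdGaussian (E := E)
  simp_rw [polarization]
  rw [integral_div, integral_sub, integral_sub, integral_add, integral_const_mul,
    integral_const_mul]
  · have sq_sq (w : E) : ‖w‖ ^ 4 = (‖w‖ ^ 2) ^ 2 := by ring
    simp only [integral_inner_pow_four_stdGaussian, sq_sq, norm_add_sq_real, norm_sub_sq_real]
    ring
  all_goals fun_prop

end stdGaussian

end ProbabilityTheory

theorem stmt6 (n : ℕ) (x z : EuclideanSpace ℝ (Fin n)) :
    ∫ a, ((inner ℝ a z : ℝ) ^ 2 - (inner ℝ a x : ℝ) ^ 2) ^ 2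
        ∂(Measure.map (MeasurableEquiv.toLp 2 (Fin n → ℝ))
            (Measure.pi fun _ : Fin n => gaussianReal 0 1)) =
      3 * ‖z‖ ^ 4 + 3 * ‖x‖ ^ 4 - 2 * ‖z‖ ^ 2 * ‖x‖ ^ 2 - 4 * (inner ℝ z x : ℝ) ^ 2 := by
  have factor (a : EuclideanSpace ℝ (Fin n)) :
      (⟪a, z⟫ ^ 2 - ⟪a, x⟫ ^ 2) ^ 2 = ⟪a, z - x⟫ ^ 2 * ⟪a, z + x⟫ ^ 2 := by
    rw [inner_sub_right, inner_add_right]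
    ring
  rw [MeasurableEquiv.coe_toLp, map_pi_eq_stdGaussian]
  simp_rw [factor]
  rw [integral_sq_inner_mul_sq_inner_stdGaussian, inner_sub_left, inner_add_right,
    inner_add_right, real_inner_self_eq_norm_sq, real_inner_self_eq_norm_sq, real_inner_comm z x,
    norm_sub_sq_real, norm_add_sq_real]
  ring
end

section
/- Fix x ∈ ℝ^n with x ≠ 0 and define the expected phase-retrieval loss ḡ : ℝ^n → ℝ by ḡ(z) = (3/2)‖z‖⁴ + (3/2)‖x‖⁴ − ‖z‖²‖x‖² − 2⟨z, x⟩². Then the gradient of ḡ at z vanishes if and only if one of the following holds: z = 0, or z = x, or z = −x, or (⟨z, x⟩ = 0 and 3‖z‖² = ‖x‖²). In particular the spurious critical points form the ring {z : ⟨z, x⟩ = 0, ‖z‖² = ‖x‖²/3}. -/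
/-!
The gradient of `ḡ` at `z` is `(6‖z‖² - 2‖x‖²) z - 4⟨z, x⟩ x`. Pairing its vanishing with `x`
gives `⟨z, x⟩ (‖z‖² - ‖x‖²) = 0`. If `⟨z, x⟩ = 0`, the equation reduces to
`(6‖z‖² - 2‖x‖²) z = 0`, i.e. `z = 0` or `3‖z‖² = ‖x‖²`. If `‖z‖ = ‖x‖`, it reduces to
`‖x‖² z = ⟨z, x⟩ x`, so `z` is a multiple of `x` of the same norm, i.e. `z = ±x`.
-/

open RealInnerProductSpace

variable {E : Type*} [NormedAddCommGroup E] [InnerProductSpace ℝ E]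

noncomputable def phaseRetrievalLoss (x z : E) : ℝ :=
  3 / 2 * ‖z‖ ^ 4 + 3 / 2 * ‖x‖ ^ 4 - ‖z‖ ^ 2 * ‖x‖ ^ 2 - 2 * ⟪z, x⟫ ^ 2

theorem hasGradientAt_phaseRetrievalLoss [CompleteSpace E] (x z : E) :
    HasGradientAt (phaseRetrievalLoss x)
      ((6 * ‖z‖ ^ 2 - 2 * ‖x‖ ^ 2) • z - (4 * ⟪z, x⟫) • x) z := by
  have hnorm : HasFDerivAt (fun z : E => ‖z‖ ^ 2) (2 • innerSL ℝ z) z := by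
    simpa using (hasFDerivAt_id z).norm_sq
  have hinner : HasFDerivAt (fun z : E => ⟪z, x⟫) (innerSL ℝ x) z :=
    (innerSL ℝ x).hasFDerivAt.congr_of_eventuallyEq
      (.of_forall fun y => by simp [real_inner_comm])
  have hD := ((((hnorm.mul hnorm).const_mul (3 / 2 : ℝ)).add
    (hasFDerivAt_const (3 / 2 * ‖x‖ ^ 4) z)).sub (hnorm.mul_const (‖x‖ ^ 2))).sub
    ((hinner.mul hinner).const_mul (2 : ℝ))
  rw [hasGradientAt_iff_hasFDerivAt]
  refine (hD.congr_of_eventuallyEq (.of_forall fun w => ?_)).congr_fderiv ?_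
  · simp only [phaseRetrievalLoss, Pi.add_apply, Pi.sub_apply, Pi.mul_apply]
    ring
  · ext y
    simp [real_inner_comm]
    ring

theorem eq_or_eq_neg_of_norm_sq_smul_eq_inner_smul {x z : E} (hx : x ≠ 0)
    (hproj : ‖x‖ ^ 2 • z = ⟪z, x⟫ • x) (hnorm : ‖z‖ = ‖x‖) : z = x ∨ z = -x := by
  have hx2 : ‖x‖ ^ 2 ≠ 0 := by positivity
  have hpair : ‖x‖ ^ 2 * ‖z‖ ^ 2 = ⟪z, x⟫ ^ 2 := by
    have h := congrArg (fun v => ⟪v, z⟫) hproj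
    simp only [real_inner_smul_left, real_inner_self_eq_norm_sq, real_inner_comm z x] at h
    linear_combination h
  rw [hnorm, ← pow_two, sq_eq_sq_iff_eq_or_eq_neg] at hpair
  rcases hpair with hzx | hzx
  · left
    rw [← hzx] at hproj
    exact smul_right_injective E hx2 hproj
  · right
    rw [← neg_eq_iff_eq_neg.mpr hzx, neg_smul, ← smul_neg] at hproj
    exact smul_right_injective E hx2 hproj

theorem inner_eq_zero_or_norm_sq_eq_of_smul_eq {x z : E}
    (h : (6 * ‖z‖ ^ 2 - 2 * ‖x‖ ^ 2) • z = (4 * ⟪z, x⟫) • x) :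
    ⟪z, x⟫ = 0 ∨ ‖z‖ ^ 2 = ‖x‖ ^ 2 := by
  have hpair := congrArg (fun v => ⟪v, x⟫) h
  simp only [real_inner_smul_left, real_inner_self_eq_norm_sq] at hpair
  have : ⟪z, x⟫ * (‖z‖ ^ 2 - ‖x‖ ^ 2) = 0 := by linear_combination hpair / 6
  rcases mul_eq_zero.mp this with h0 | h0
  · exact .inl h0
  · exact .inr (sub_eq_zero.mp h0)

theorem phaseRetrievalLoss_gradient_eq_zero_iff {x z : E} (hx : x ≠ 0) :
    (6 * ‖z‖ ^ 2 - 2 * ‖x‖ ^ 2) • z - (4 * ⟪z, x⟫) • x = 0 ↔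
      z = 0 ∨ z = x ∨ z = -x ∨ (⟪z, x⟫ = 0 ∧ 3 * ‖z‖ ^ 2 = ‖x‖ ^ 2) := by
  rw [sub_eq_zero]
  constructor
  · intro h
    rcases inner_eq_zero_or_norm_sq_eq_of_smul_eq h with horth | hnorm
    · rw [horth, mul_zero, zero_smul, smul_eq_zero] at h
      rcases h with hring | hz
      · exact .inr <| .inr <| .inr ⟨horth, by linarith⟩
      · exact .inl hz
    · have hproj : ‖x‖ ^ 2 • z = ⟪z, x⟫ • x := by
        rw [hnorm] at h
        refine smul_right_injective E (four_ne_zero (α := ℝ)) ?_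
        simp only [smul_smul]
        convert h using 2
        ring
      have := eq_or_eq_neg_of_norm_sq_smul_eq_inner_smul hx hproj
        (by simpa [pow_left_inj₀] using hnorm)
      tauto
  · rintro (rfl | rfl | rfl | ⟨horth, hring⟩)
    · simp
    · rw [real_inner_self_eq_norm_sq]
      ring_nf
    · rw [inner_neg_left, real_inner_self_eq_norm_sq, norm_neg]
      module
    · rw [horth, show 6 * ‖z‖ ^ 2 - 2 * ‖x‖ ^ 2 = 0 by linarith]
      simp

theorem stmt7 (n : ℕ) (x : EuclideanSpace ℝ (Fin n)) (hx : x ≠ 0)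
    (g : EuclideanSpace ℝ (Fin n) → ℝ)
    (hg : ∀ z, g z = (3 / 2) * ‖z‖ ^ 4 + (3 / 2) * ‖x‖ ^ 4 - ‖z‖ ^ 2 * ‖x‖ ^ 2
        - 2 * (inner ℝ z x : ℝ) ^ 2)
    (z : EuclideanSpace ℝ (Fin n)) :
    gradient g z = 0 ↔
      z = 0 ∨ z = x ∨ z = -x ∨ ((inner ℝ z x : ℝ) = 0 ∧ 3 * ‖z‖ ^ 2 = ‖x‖ ^ 2) := by
  obtain rfl : g = phaseRetrievalLoss x := funext hg
  rw [(hasGradientAt_phaseRetrievalLoss x z).gradient]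
  exact phaseRetrievalLoss_gradient_eq_zero_iff hx
end

section
/- Fix x ∈ ℝ^n with x ≠ 0 and define ḡ : ℝ^n → ℝ by ḡ(z) = (3/2)‖z‖⁴ + (3/2)‖x‖⁴ − ‖z‖²‖x‖² − 2⟨z, x⟩². Let z ∈ ℝ^n satisfy ⟨z, x⟩ = 0 and 3‖z‖² = ‖x‖². Then the second derivative at t = 0 of the function t ↦ ḡ(z + t·x) equals −4‖x‖⁴ < 0. In particular every point of the ring of spurious critical points of ḡ admits the negative curvature direction x, so these critical points are strict saddles. -/
/-!
Along the line `t ↦ z + t • x` through a point `z ⟂ x`, the loss is an even quartic in `t`,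
`ḡ(z) + 3‖x‖²(‖z‖² − ‖x‖²) t² + (3/2)‖x‖⁴ t⁴`, because `‖z + t • x‖² = ‖z‖² + t²‖x‖²` and
`⟨z + t • x, x⟩ = t‖x‖²`. Its second derivative at `0` is `6‖x‖²(‖z‖² − ‖x‖²)`, which on the
ring `3‖z‖² = ‖x‖²` equals `−4‖x‖⁴`.
-/

open scoped RealInnerProductSpace

theorem hasDerivAt_even_quartic (a b c t : ℝ) :
    HasDerivAt (fun t : ℝ => a + b * t ^ 2 + c * t ^ 4) (2 * b * t + 4 * c * t ^ 3) t :=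
  ((((hasDerivAt_pow 2 t).const_mul b).const_add a).add
    ((hasDerivAt_pow 4 t).const_mul c)).congr_deriv (by norm_num; ring)

theorem deriv_even_quartic (a b c : ℝ) :
    deriv (fun t : ℝ => a + b * t ^ 2 + c * t ^ 4) = fun t => 2 * b * t + 4 * c * t ^ 3 :=
  funext fun t => (hasDerivAt_even_quartic a b c t).deriv

theorem deriv_deriv_even_quartic (a b c t : ℝ) :
    deriv (deriv fun t : ℝ => a + b * t ^ 2 + c * t ^ 4) t = 2 * b + 12 * c * t ^ 2 := by
  rw [deriv_even_quartic]
  exact (((hasDerivAt_id t).const_mul (2 * b)).add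
    ((hasDerivAt_pow 3 t).const_mul (4 * c))).deriv.trans (by norm_num; ring)

section PhaseRetrieval

variable {E : Type*} [NormedAddCommGroup E] [InnerProductSpace ℝ E]

noncomputable def expectedPhaseLoss (x z : E) : ℝ :=
  (3 / 2) * ‖z‖ ^ 4 + (3 / 2) * ‖x‖ ^ 4 - ‖z‖ ^ 2 * ‖x‖ ^ 2 - 2 * ⟪z, x⟫ ^ 2

variable {x z : E}

theorem norm_add_smul_sq_of_inner_eq_zero (hzx : ⟪z, x⟫ = 0) (t : ℝ) :
    ‖z + t • x‖ ^ 2 = ‖z‖ ^ 2 + t ^ 2 * ‖x‖ ^ 2 := by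
  rw [norm_add_sq_real, real_inner_smul_right, hzx, norm_smul, Real.norm_eq_abs, mul_pow, sq_abs]
  ring

theorem inner_add_smul_left_of_inner_eq_zero (hzx : ⟪z, x⟫ = 0) (t : ℝ) :
    ⟪z + t • x, x⟫ = t * ‖x‖ ^ 2 := by
  rw [inner_add_left, real_inner_smul_left, hzx, real_inner_self_eq_norm_sq, zero_add]

theorem expectedPhaseLoss_add_smul (hzx : ⟪z, x⟫ = 0) (t : ℝ) :
    expectedPhaseLoss x (z + t • x) = expectedPhaseLoss x z
      + 3 * ‖x‖ ^ 2 * (‖z‖ ^ 2 - ‖x‖ ^ 2) * t ^ 2 + (3 / 2) * ‖x‖ ^ 4 * t ^ 4 := by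
  have hnorm4 : ‖z + t • x‖ ^ 4 = (‖z‖ ^ 2 + t ^ 2 * ‖x‖ ^ 2) ^ 2 := by
    rw [← norm_add_smul_sq_of_inner_eq_zero hzx]; ring
  simp only [expectedPhaseLoss]
  rw [hnorm4, norm_add_smul_sq_of_inner_eq_zero hzx, inner_add_smul_left_of_inner_eq_zero hzx, hzx]
  ring

theorem deriv_deriv_expectedPhaseLoss_add_smul (hzx : ⟪z, x⟫ = 0) :
    deriv (deriv fun t : ℝ => expectedPhaseLoss x (z + t • x)) 0
      = 6 * ‖x‖ ^ 2 * (‖z‖ ^ 2 - ‖x‖ ^ 2) := by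
  simp only [expectedPhaseLoss_add_smul hzx, deriv_deriv_even_quartic]
  ring

end PhaseRetrieval

theorem stmt8 (n : ℕ) (x : EuclideanSpace ℝ (Fin n)) (hx : x ≠ 0)
    (g : EuclideanSpace ℝ (Fin n) → ℝ)
    (hg : ∀ z, g z = (3 / 2) * ‖z‖ ^ 4 + (3 / 2) * ‖x‖ ^ 4 - ‖z‖ ^ 2 * ‖x‖ ^ 2
        - 2 * (inner ℝ z x : ℝ) ^ 2)
    (z : EuclideanSpace ℝ (Fin n))
    (hzx : (inner ℝ z x : ℝ) = 0) (hring : 3 * ‖z‖ ^ 2 = ‖x‖ ^ 2) :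
    deriv (deriv fun t : ℝ => g (z + t • x)) 0 = -4 * ‖x‖ ^ 4 ∧
      (-4 : ℝ) * ‖x‖ ^ 4 < 0 := by
  have hg_eq : g = expectedPhaseLoss x := funext hg
  have hx_pos : 0 < ‖x‖ := norm_pos_iff.mpr hx
  refine ⟨?_, by linarith [pow_pos hx_pos 4]⟩
  rw [hg_eq, deriv_deriv_expectedPhaseLoss_add_smul hzx]
  linear_combination 2 * ‖x‖ ^ 2 * hring
end

section
/- Let p₁, …, p_n be multivariate polynomials in n variables over ℂ, and for each i let p_i¹ denote the homogeneous component of p_i of degree equal to the total degree of p_i. If the homogeneous system p₁¹(x) = ⋯ = p_n¹(x) = 0 has only the trivial solution x = 0 in ℂ^n, then the solution set {x ∈ ℂ^n : p₁(x) = ⋯ = p_n(x) = 0} of the original system is finite. -/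
/-!
Let `qᵢ` be the top homogeneous component of `pᵢ`, `I = (pᵢ)` and `J = (qᵢ)`. As the `qᵢ` vanish
simultaneously only at `0`, the Nullstellensatz puts every variable in `√J`, so `J` contains every
polynomial all of whose monomials have degree at least some `M`. If `deg f = e > M`, the top
component of `f` is then `∑ aᵢ qᵢ` with `aᵢ` homogeneous of degree `e - deg pᵢ`, and
`f - ∑ aᵢ pᵢ` has degree `< e`. Thus every polynomial is congruent modulo `I` to one of degree
`≤ M`, so `ℂ[X] ⧸ I` is finite-dimensional; the points of the zero set give distinct characters
of this algebra, which are linearly independent, hence finitely many.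
-/

open MvPolynomial

namespace MvPolynomial

variable {σ R : Type*}

theorem homogeneousComponent_mul_of_isHomogeneous [CommSemiring R] (a : MvPolynomial σ R)
    {q : MvPolynomial σ R} {d e : ℕ} (hq : q.IsHomogeneous d) (hde : d ≤ e) :
    homogeneousComponent e (a * q) = homogeneousComponent (e - d) a * q := by
  induction a using MvPolynomial.induction_on' with
  | monomial s c =>
    rw [homogeneousComponent_of_mem ((isHomogeneous_monomial c rfl).mul hq),
      homogeneousComponent_of_mem (isHomogeneous_monomial c rfl)]
    split_ifs <;> first | rfl | omega
  | add a b ha hb => rw [add_mul, map_add, map_add, ha, hb, add_mul]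

section CommRing

variable [CommRing R]

theorem totalDegree_sub_homogeneousComponent_lt {p : MvPolynomial σ R} (hp : 0 < p.totalDegree) :
    (p - homogeneousComponent p.totalDegree p).totalDegree < p.totalDegree := by
  refine (Finset.sup_lt_iff hp).2 fun s hs => ?_
  rw [mem_support_iff, coeff_sub, coeff_homogeneousComponent] at hs
  have hle : s.degree ≤ p.totalDegree :=
    le_totalDegree (mem_support_iff.2 fun h => by simp [h] at hs)
  have hne : s.degree ≠ p.totalDegree := fun h => hs (by rw [if_pos h, sub_self])
  exact lt_of_le_of_ne hle hne

theorem totalDegree_mul_sub_homogeneousComponent_lt {a p : MvPolynomial σ R} {m : ℕ}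
    (ha : a.IsHomogeneous m) (hpos : 0 < m + p.totalDegree) :
    (a * (p - homogeneousComponent p.totalDegree p)).totalDegree < m + p.totalDegree := by
  obtain hp | hp := Nat.eq_zero_or_pos p.totalDegree
  · rw [hp, homogeneousComponent_eq_self ((totalDegree_zero_iff_isHomogeneous σ).1 hp)]
    simpa [hp] using hpos
  · calc _ ≤ a.totalDegree + (p - homogeneousComponent p.totalDegree p).totalDegree :=
          totalDegree_mul _ _
      _ < m + p.totalDegree :=
          add_lt_add_of_le_of_lt ha.totalDegree_le (totalDegree_sub_homogeneousComponent_lt hp)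

variable {ι : Type*} [Fintype ι]

theorem exists_sub_mem_span_totalDegree_lt (p : ι → MvPolynomial σ R) {f : MvPolynomial σ R}
    (hf : 0 < f.totalDegree) (hp : ∀ i, (p i).totalDegree ≤ f.totalDegree)
    (htop : homogeneousComponent f.totalDegree f ∈
      Ideal.span (Set.range fun i => homogeneousComponent (p i).totalDegree (p i))) :
    ∃ g, f - g ∈ Ideal.span (Set.range p) ∧ g.totalDegree < f.totalDegree := by
  set e := f.totalDegree
  set q := fun i => homogeneousComponent (p i).totalDegree (p i)
  obtain ⟨c, hc⟩ := Ideal.mem_span_range_iff_exists_fun.1 htop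
  set a := fun i => homogeneousComponent (e - (p i).totalDegree) (c i)
  have htop' : homogeneousComponent e f = ∑ i, a i * q i := by
    calc homogeneousComponent e f = homogeneousComponent e (homogeneousComponent e f) :=
          (homogeneousComponent_eq_self (homogeneousComponent_isHomogeneous _ _)).symm
      _ = ∑ i, a i * q i := by
          rw [← hc, map_sum]
          exact Finset.sum_congr rfl fun i _ => homogeneousComponent_mul_of_isHomogeneous _
            (homogeneousComponent_isHomogeneous _ _) (hp i)
  refine ⟨f - ∑ i, a i * p i, ?_, ?_⟩
  · rw [sub_sub_cancel]
    exact Ideal.sum_mem _ fun i _ => Ideal.mul_mem_left _ _ (Ideal.subset_span ⟨i, rfl⟩)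
  have hsplit : f - ∑ i, a i * p i =
      (f - homogeneousComponent e f) - ∑ i, a i * (p i - q i) := by
    rw [htop']
    simp only [mul_sub, Finset.sum_sub_distrib]
    ring
  rw [hsplit]
  refine (totalDegree_sub _ _).trans_lt (max_lt (totalDegree_sub_homogeneousComponent_lt hf) ?_)
  refine (totalDegree_finsetSum _ _).trans_lt ((Finset.sup_lt_iff hf).2 fun i _ => ?_)
  have := totalDegree_mul_sub_homogeneousComponent_lt (p := p i)
    (homogeneousComponent_isHomogeneous (e - (p i).totalDegree) (c i)) (by omega)
  rwa [Nat.sub_add_cancel (hp i)] at this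

theorem exists_sub_mem_span_of_pow_idealOfVars_le (p : ι → MvPolynomial σ R) {M : ℕ}
    (hM : idealOfVars σ R ^ M ≤
      Ideal.span (Set.range fun i => homogeneousComponent (p i).totalDegree (p i)))
    (hp : ∀ i, (p i).totalDegree ≤ M) (f : MvPolynomial σ R) :
    ∃ g ∈ restrictTotalDegree σ R M, f - g ∈ Ideal.span (Set.range p) := by
  induction hf : f.totalDegree using Nat.strong_induction_on generalizing f with
  | _ e ih =>
  by_cases he : e ≤ M
  · exact ⟨f, (mem_restrictTotalDegree _ _ _).2 (hf ▸ he), by simp⟩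
  have htop : homogeneousComponent e f ∈ idealOfVars σ R ^ M := by
    refine (mem_pow_idealOfVars_iff _ _).2 fun s hs => ?_
    rw [support_homogeneousComponent, Finset.mem_filter] at hs
    omega
  subst hf
  obtain ⟨f', hff', hf'⟩ := exists_sub_mem_span_totalDegree_lt p (by omega)
    (fun i => (hp i).trans (by omega)) (hM htop)
  obtain ⟨g, hg, hf'g⟩ := ih _ hf' f' rfl
  exact ⟨g, hg, by simpa using add_mem hff' hf'g⟩

theorem finite_quotient_span_of_pow_idealOfVars_le [Finite σ] (p : ι → MvPolynomial σ R) {M : ℕ}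
    (hM : idealOfVars σ R ^ M ≤
      Ideal.span (Set.range fun i => homogeneousComponent (p i).totalDegree (p i)))
    (hp : ∀ i, (p i).totalDegree ≤ M) :
    Module.Finite R (MvPolynomial σ R ⧸ Ideal.span (Set.range p)) := by
  refine Module.Finite.of_surjective ((Ideal.Quotient.mkₐ R _).toLinearMap ∘ₗ
    (restrictTotalDegree σ R M).subtype) fun x => ?_
  obtain ⟨f, rfl⟩ := Ideal.Quotient.mk_surjective x
  obtain ⟨g, hg, hfg⟩ := exists_sub_mem_span_of_pow_idealOfVars_le p hM hp f
  exact ⟨⟨g, hg⟩, (Ideal.Quotient.mk_eq_mk_iff_sub_mem _ _).2 (by simpa using neg_mem hfg)⟩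

end CommRing

theorem finite_zeroLocus_of_finite_quotient {K : Type*} [Field K] (I : Ideal (MvPolynomial σ K))
    [Module.Finite K (MvPolynomial σ K ⧸ I)] : (zeroLocus K I).Finite := by
  let χ : zeroLocus K I → (MvPolynomial σ K ⧸ I →ₐ[K] K) :=
    fun x => Ideal.Quotient.liftₐ I (aeval x.1) x.2
  refine Set.finite_coe_iff.1 (Finite.of_injective χ fun x y hxy => ?_)
  ext j
  have hχ (z : zeroLocus K I) : χ z (Ideal.Quotient.mk I (X j)) = z.1 j := aeval_X _ _
  rw [← hχ x, ← hχ y, hxy]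

theorem exists_pow_idealOfVars_le {K : Type*} [Field K] [IsAlgClosed K] [Finite σ]
    {J : Ideal (MvPolynomial σ K)} (hJ : zeroLocus K J ⊆ {0}) : ∃ M, idealOfVars σ K ^ M ≤ J := by
  refine Ideal.exists_pow_le_of_le_radical_of_fg ?_ (idealOfVars_fg σ K)
  rw [idealOfVars, Ideal.span_le, ← vanishingIdeal_zeroLocus_eq_radical (K := K)]
  rintro _ ⟨j, rfl⟩ x hx
  simp [show x = 0 from hJ hx]

end MvPolynomial

theorem stmt9 (n : ℕ) (p : Fin n → MvPolynomial (Fin n) ℂ)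
    (h : ∀ x : Fin n → ℂ,
        (∀ i, MvPolynomial.eval x
            (MvPolynomial.homogeneousComponent ((p i).totalDegree) (p i)) = 0) → x = 0) :
    {x : Fin n → ℂ | ∀ i, MvPolynomial.eval x (p i) = 0}.Finite := by
  set J := Ideal.span (Set.range fun i => homogeneousComponent (p i).totalDegree (p i))
  obtain ⟨M, hM⟩ := exists_pow_idealOfVars_le (K := ℂ) (J := J)
    fun x hx => h x fun i => hx _ (Ideal.subset_span ⟨i, rfl⟩)
  have hp (i) : (p i).totalDegree ≤ Finset.univ.sup fun i => (p i).totalDegree :=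
    Finset.le_sup (f := fun i => (p i).totalDegree) (Finset.mem_univ i)
  have := finite_quotient_span_of_pow_idealOfVars_le p
    ((Ideal.pow_le_pow_right le_sup_left).trans hM) fun i => le_sup_of_le_right (hp i)
  simpa [zeroLocus_span] using finite_zeroLocus_of_finite_quotient (Ideal.span (Set.range p))
end

section
/- Let a₁, …, a_m, x, z ∈ ℝ^n with z ≠ 0, and set Δ_j = ⟨a_j, z⟩² − ⟨a_j, x⟩² and v = x − (⟨z, x⟩/‖z‖²)·z (the component of x orthogonal to z). If the first-order condition Σ_{j=1}^m Δ_j ⟨a_j, z⟩ · a_j = 0 holds, then Σ_{j=1}^m Δ_j ⟨a_j, v⟩² = Σ_{j=1}^m Δ_j ⟨a_j, x⟩². -/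
open Finset RealInnerProductSpace

section WeightedQuadraticForm

variable {ι E : Type*} [Fintype ι] [NormedAddCommGroup E] [InnerProductSpace ℝ E]

theorem sum_mul_inner_eq_zero_of_sum_smul_eq_zero {b : ι → ℝ} {a : ι → E}
    (h : ∑ j, b j • a j = 0) (w : E) : ∑ j, b j * ⟪a j, w⟫ = 0 := by
  simpa only [sum_inner, real_inner_smul_left, inner_zero_left] using congrArg (⟪·, w⟫) h

/-- The hypothesis says the bilinear form of `q y = ∑ⱼ wⱼ ⟪aⱼ, y⟫²` pairs `z` with everything to zero,
so both the cross term and the `c²` term of `q (x - c • z)` vanish. -/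
theorem sum_mul_inner_sub_smul_sq_eq {w : ι → ℝ} {a : ι → E} {z : E}
    (h : ∑ j, (w j * ⟪a j, z⟫) • a j = 0) (x : E) (c : ℝ) :
    ∑ j, w j * ⟪a j, x - c • z⟫ ^ 2 = ∑ j, w j * ⟪a j, x⟫ ^ 2 := by
  have hx := sum_mul_inner_eq_zero_of_sum_smul_eq_zero h x
  have hz := sum_mul_inner_eq_zero_of_sum_smul_eq_zero h z
  calc ∑ j, w j * ⟪a j, x - c • z⟫ ^ 2
      = ∑ j, w j * ⟪a j, x⟫ ^ 2 - 2 * c * ∑ j, w j * ⟪a j, z⟫ * ⟪a j, x⟫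
          + c ^ 2 * ∑ j, w j * ⟪a j, z⟫ * ⟪a j, z⟫ := by
        simp only [mul_sum, ← sum_sub_distrib, ← sum_add_distrib, inner_sub_right,
          real_inner_smul_right]
        exact sum_congr rfl fun j _ => by ring
    _ = ∑ j, w j * ⟪a j, x⟫ ^ 2 := by rw [hx, hz]; ring

end WeightedQuadraticForm

theorem stmt12_general (n m : ℕ) (a : Fin m → EuclideanSpace ℝ (Fin n))
    (x z : EuclideanSpace ℝ (Fin n))
    (h : ∑ j : Fin m, (((inner ℝ (a j) z : ℝ) ^ 2 - (inner ℝ (a j) x : ℝ) ^ 2) *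
        (inner ℝ (a j) z : ℝ)) • a j = 0) :
    ∑ j : Fin m, ((inner ℝ (a j) z : ℝ) ^ 2 - (inner ℝ (a j) x : ℝ) ^ 2) *
        (inner ℝ (a j) (x - ((inner ℝ z x : ℝ) / ‖z‖ ^ 2) • z) : ℝ) ^ 2 =
      ∑ j : Fin m, ((inner ℝ (a j) z : ℝ) ^ 2 - (inner ℝ (a j) x : ℝ) ^ 2) *
        (inner ℝ (a j) x : ℝ) ^ 2 :=
  sum_mul_inner_sub_smul_sq_eq h x _

theorem stmt12 (n m : ℕ) (a : Fin m → EuclideanSpace ℝ (Fin n))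
    (x z : EuclideanSpace ℝ (Fin n)) (hz : z ≠ 0)
    (h : ∑ j : Fin m, (((inner ℝ (a j) z : ℝ) ^ 2 - (inner ℝ (a j) x : ℝ) ^ 2) *
        (inner ℝ (a j) z : ℝ)) • a j = 0) :
    ∑ j : Fin m, ((inner ℝ (a j) z : ℝ) ^ 2 - (inner ℝ (a j) x : ℝ) ^ 2) *
        (inner ℝ (a j) (x - ((inner ℝ z x : ℝ) / ‖z‖ ^ 2) • z) : ℝ) ^ 2 =
      ∑ j : Fin m, ((inner ℝ (a j) z : ℝ) ^ 2 - (inner ℝ (a j) x : ℝ) ^ 2) *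
        (inner ℝ (a j) x : ℝ) ^ 2 :=
  stmt12_general n m a x z h
end

section
/- Let a₁, …, a_m, x, z ∈ ℝ^n with x ≠ 0, and let δ₀, δ₁ be reals with 0 ≤ δ₀ < 1/6 and 0 ≤ δ₁ < 5/36. Assume: (i) ⟨z, x⟩² ≤ δ₀‖z‖²‖x‖²; (ii) (1/3 − δ₀)‖x‖² ≤ ‖z‖² ≤ (1/3 + δ₀)‖x‖²; (iii) (1/m) Σ_{j=1}^m ⟨a_j, z⟩²⟨a_j, x⟩² ≤ (1 + δ₁)(‖z‖²‖x‖² + 2⟨z, x⟩²); and (iv) (1/m) Σ_{j=1}^m ⟨a_j, x⟩⁴ ≥ (3 − δ₁)‖x‖⁴. Then (1/m) Σ_{j=1}^m ( 3⟨a_j, z⟩²⟨a_j, x⟩² − ⟨a_j, x⟩⁴ ) < −( ‖z‖²‖x‖² + ⟨z, x⟩² ). In particular, the Riemannian Hessian Rayleigh quotient of the phase-retrieval loss at the critical point zzᵀ in the direction xuᵀ + uxᵀ (u = z/‖z‖), which under the first-order condition equals the left-hand side divided by (‖z‖²‖x‖² + ⟨z, x⟩²), is smaller than −1. -/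
/-!
Write `X = ‖x‖⁴`, `P = ‖z‖²‖x‖²`, `Q = ⟨z, x⟩²`. By (iii) and (iv) the average is at most
`3(1 + δ₁)(P + 2Q) - (3 - δ₁)X`; hypothesis (i) gives `Q ≤ δ₀P` and (ii) gives `P ≤ (1/3 + δ₀)X`,
so `3(1 + δ₁)(P + 2Q) + P + Q ≤ (1/3 + δ₀)(3(1 + δ₁)(1 + 2δ₀) + 1 + δ₀)X`. This coefficient is
increasing in both `δ₀` and `δ₁` and equals `3 - δ₁ = 103/36` at `(δ₀, δ₁) = (1/6, 5/36)`, so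
it is strictly below `3 - δ₁` on the admissible range.
-/

open Finset

theorem hyperRing_coeff_lt_three_sub {δ₀ δ₁ : ℝ} (hδ₀ : 0 ≤ δ₀) (hδ₀' : δ₀ < 1 / 6)
    (hδ₁ : 0 ≤ δ₁) (hδ₁' : δ₁ < 5 / 36) :
    (1 / 3 + δ₀) * (3 * (1 + δ₁) * (1 + 2 * δ₀) + 1 + δ₀) < 3 - δ₁ := by
  nlinarith [mul_nonneg hδ₀ hδ₁, mul_nonneg (mul_nonneg hδ₀ hδ₀) hδ₁,
    mul_le_mul_of_nonneg_left hδ₀'.le (mul_nonneg hδ₀ hδ₁)]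

theorem hyperRing_bound {δ₀ δ₁ X P Q S₁ S₂ : ℝ} (hδ₀ : 0 ≤ δ₀) (hδ₀' : δ₀ < 1 / 6)
    (hδ₁ : 0 ≤ δ₁) (hδ₁' : δ₁ < 5 / 36) (hX : 0 < X) (hQ : Q ≤ δ₀ * P)
    (hP : P ≤ (1 / 3 + δ₀) * X) (hS₁ : S₁ ≤ (1 + δ₁) * (P + 2 * Q))
    (hS₂ : (3 - δ₁) * X ≤ S₂) :
    3 * S₁ - S₂ < -(P + Q) := by
  have hcoeff : 0 ≤ 3 * (1 + δ₁) * (1 + 2 * δ₀) + 1 + δ₀ := by positivity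
  have hQ' : (6 * (1 + δ₁) + 1) * Q ≤ (6 * (1 + δ₁) + 1) * (δ₀ * P) :=
    mul_le_mul_of_nonneg_left hQ (by positivity)
  have hP' := mul_le_mul_of_nonneg_left hP hcoeff
  have hlt := mul_lt_mul_of_pos_right (hyperRing_coeff_lt_three_sub hδ₀ hδ₀' hδ₁ hδ₁') hX
  nlinarith

theorem mul_sum_three_mul_mul_sub {ι : Type*} [Fintype ι] (c : ℝ) (f g h : ι → ℝ) :
    c * ∑ j, (3 * f j * g j - h j) = 3 * (c * ∑ j, f j * g j) - c * ∑ j, h j := by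
  simp only [sum_sub_distrib, mul_assoc, ← mul_sum]
  ring

theorem stmt13 (n m : ℕ) (a : Fin m → EuclideanSpace ℝ (Fin n))
    (x z : EuclideanSpace ℝ (Fin n)) (hx : x ≠ 0) (δ₀ δ₁ : ℝ)
    (hδ₀ : 0 ≤ δ₀) (hδ₀' : δ₀ < 1 / 6) (hδ₁ : 0 ≤ δ₁) (hδ₁' : δ₁ < 5 / 36)
    (h1 : (inner ℝ z x : ℝ) ^ 2 ≤ δ₀ * ‖z‖ ^ 2 * ‖x‖ ^ 2)
    (h2 : (1 / 3 - δ₀) * ‖x‖ ^ 2 ≤ ‖z‖ ^ 2)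
    (h2' : ‖z‖ ^ 2 ≤ (1 / 3 + δ₀) * ‖x‖ ^ 2)
    (h3 : (1 / m : ℝ) * ∑ j : Fin m, (inner ℝ (a j) z : ℝ) ^ 2 * (inner ℝ (a j) x : ℝ) ^ 2
        ≤ (1 + δ₁) * (‖z‖ ^ 2 * ‖x‖ ^ 2 + 2 * (inner ℝ z x : ℝ) ^ 2))
    (h4 : (3 - δ₁) * ‖x‖ ^ 4 ≤ (1 / m : ℝ) * ∑ j : Fin m, (inner ℝ (a j) x : ℝ) ^ 4) :
    (1 / m : ℝ) * ∑ j : Fin m,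
        (3 * (inner ℝ (a j) z : ℝ) ^ 2 * (inner ℝ (a j) x : ℝ) ^ 2 - (inner ℝ (a j) x : ℝ) ^ 4)
      < -(‖z‖ ^ 2 * ‖x‖ ^ 2 + (inner ℝ z x : ℝ) ^ 2) ∧
    ((1 / m : ℝ) * ∑ j : Fin m,
        (3 * (inner ℝ (a j) z : ℝ) ^ 2 * (inner ℝ (a j) x : ℝ) ^ 2 - (inner ℝ (a j) x : ℝ) ^ 4))
      / (‖z‖ ^ 2 * ‖x‖ ^ 2 + (inner ℝ z x : ℝ) ^ 2) < -1 := by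
  have hx2 : 0 < ‖x‖ ^ 2 := by positivity
  have hP : ‖z‖ ^ 2 * ‖x‖ ^ 2 ≤ (1 / 3 + δ₀) * ‖x‖ ^ 4 := by
    nlinarith [mul_le_mul_of_nonneg_right h2' hx2.le]
  have hQ : (inner ℝ z x : ℝ) ^ 2 ≤ δ₀ * (‖z‖ ^ 2 * ‖x‖ ^ 2) := by linarith
  have hlt := hyperRing_bound hδ₀ hδ₀' hδ₁ hδ₁' (by positivity) hQ hP h3 h4
  rw [← mul_sum_three_mul_mul_sub] at hlt
  have hden : 0 < ‖z‖ ^ 2 * ‖x‖ ^ 2 + (inner ℝ z x : ℝ) ^ 2 := by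
    have hz2 : 0 < ‖z‖ ^ 2 := lt_of_lt_of_le (by nlinarith) h2
    positivity
  exact ⟨hlt, (div_lt_iff₀ hden).2 (by linarith)⟩
end

section
/- There exist a continuously differentiable function f : ℝ² → ℝ and a step size α ∈ (0, 1/2) with the following properties: (a) the set S of critical points of f that are not local minima has Lebesgue measure zero in ℝ²; (b) the set of initial points (x₀, y₀) ∈ ℝ² for which the gradient descent iterates φ^k(x₀, y₀), where φ(w) = w − α∇f(w), converge as k → ∞ to a point of S, has strictly positive Lebesgue measure. (Such an f may be taken of the form f(x, y) = −p(x) + y², where p ≥ 0 is a C¹ function whose zero set is a compact nowhere-dense set of positive one-dimensional Lebesgue measure, e.g. a Smith–Volterra–Cantor set.) -/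
open MeasureTheory Filter Metric Topology

/-!
Take a closed set `K ⊆ ℝ` of positive measure with dense complement (the complement of an open
neighbourhood of `ℚ` of small measure) and let `p x = ∫₀ˣ dist(t, K) dt`. Then `p` is `C¹` and
strictly increasing, and `p'` vanishes on `K`. For `f (x, y) = y² - p x` the critical points lie on
the line `y = 0`, a null set, and none of them is a local minimum since `f` decreases in `x`. On the
strip `K × ℝ` the `x`-component of `∇f` vanishes, so gradient descent only multiplies `y` by
`1 - 2α` and converges to the critical point `(x, 0)`; the strip has positive measure.
-/

theorem exists_isClosed_dense_compl_volume_ne_zero :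
    ∃ K : Set ℝ, IsClosed K ∧ Dense Kᶜ ∧ volume K ≠ 0 := by
  obtain ⟨U, hQU, hU, hUvol⟩ := Set.exists_isOpen_lt_of_lt (μ := volume)
    (Set.range ((↑) : ℚ → ℝ)) 1 (by rw [(Set.countable_range _).measure_zero]; exact one_pos)
  refine ⟨Uᶜ, hU.isClosed_compl, by rw [compl_compl]; exact Rat.denseRange_cast.mono hQU,
    fun h => ?_⟩
  have := measure_univ_le_add_compl U (μ := volume)
  rw [h, add_zero, Real.volume_univ] at this
  exact hUvol.not_ge (le_top.trans this)

theorem strictMono_of_hasDerivAt_nonneg_of_dense {f f' : ℝ → ℝ}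
    (hf : ∀ x, HasDerivAt f (f' x) x) (hf' : ∀ x, 0 ≤ f' x) (hdense : Dense {x | f' x ≠ 0}) :
    StrictMono f := by
  have hmono : Monotone f := monotone_of_hasDerivAt_nonneg hf hf'
  refine hmono.strictMono_of_injective fun a b hab => ?_
  by_contra hne
  wlog hlt : a < b generalizing a b
  · exact this b a hab.symm (Ne.symm hne) ((Ne.symm hne).lt_of_le (not_lt.1 hlt))
  obtain ⟨r, hr0, hr⟩ := hdense.exists_mem_open isOpen_Ioo (Set.nonempty_Ioo.2 hlt)
  have hconst : f =ᶠ[𝓝 r] fun _ => f a := by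
    filter_upwards [Ioo_mem_nhds hr.1 hr.2] with x hx
    exact le_antisymm (hab ▸ hmono hx.2.le) (hmono hx.1.le)
  exact hr0 ((hf r).unique ((hasDerivAt_const r (f a)).congr_of_eventuallyEq hconst))

theorem exists_strictMono_hasDerivAt_volume_setOf_eq_zero_ne_zero :
    ∃ p p' : ℝ → ℝ, ContDiff ℝ 1 p ∧ (∀ x, HasDerivAt p (p' x) x) ∧ StrictMono p ∧
      volume {x | p' x = 0} ≠ 0 := by
  obtain ⟨K, hKc, hKd, hKv⟩ := exists_isClosed_dense_compl_volume_ne_zero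
  have hderiv : ∀ x, HasDerivAt (fun x => ∫ t in (0 : ℝ)..x, infDist t K) (infDist x K) x :=
    fun x => ((continuous_infDist_pt K).integral_hasStrictDerivAt 0 x).hasDerivAt
  have hC1 : ContDiff ℝ 1 fun x => ∫ t in (0 : ℝ)..x, infDist t K :=
    contDiff_one_iff_deriv.2 ⟨fun x => (hderiv x).differentiableAt,
      by simpa only [funext fun x => (hderiv x).deriv] using continuous_infDist_pt K⟩
  refine ⟨_, _, hC1, hderiv,
    strictMono_of_hasDerivAt_nonneg_of_dense hderiv (fun _ => infDist_nonneg) (hKd.mono ?_),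
    fun h => hKv (measure_mono_null (fun x hx => infDist_zero_of_mem hx) h)⟩
  exact fun x hx => ((hKc.notMem_iff_infDist_pos (nonempty_of_measure_ne_zero hKv)).1 hx).ne'

theorem EuclideanSpace.volume_setOf_apply_eq_zero {ι : Type*} [Fintype ι] (i : ι) :
    volume {w : EuclideanSpace ℝ ι | w i = 0} = 0 := by
  classical
  refine Measure.addHaar_submodule volume (EuclideanSpace.proj (𝕜 := ℝ) i).toLinearMap.ker
    fun h => ?_
  have : EuclideanSpace.single i (1 : ℝ) ∈ (EuclideanSpace.proj (𝕜 := ℝ) i).toLinearMap.ker :=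
    h ▸ trivial
  simp at this

theorem EuclideanSpace.volume_setOf_apply_mem_ne_zero {ι : Type*} [Fintype ι] (i : ι)
    {s : Set ℝ} (hs : volume s ≠ 0) : volume {w : EuclideanSpace ℝ ι | w i ∈ s} ≠ 0 := by
  classical
  have hpi : {w : EuclideanSpace ℝ ι | w i ∈ s} = (MeasurableEquiv.toLp 2 (ι → ℝ)).symm ⁻¹'
      Set.univ.pi (Function.update (fun _ => Set.univ) i s) := by
    ext w
    simp [Function.update_apply]
  rw [hpi, (volume_preserving_symm_measurableEquiv_toLp ι).measure_preimage_equiv, volume_pi_pi,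
    Finset.prod_ne_zero_iff]
  intro j _
  rcases eq_or_ne j i with rfl | hj <;> simp [*]

noncomputable def trough (p : ℝ → ℝ) (w : EuclideanSpace ℝ (Fin 2)) : ℝ := w 1 ^ 2 - p (w 0)

section Trough

variable {p p' : ℝ → ℝ}

theorem contDiff_trough (hp : ContDiff ℝ 1 p) : ContDiff ℝ 1 (trough p) :=
  ((EuclideanSpace.proj (1 : Fin 2)).contDiff.pow 2).sub
    (hp.comp (EuclideanSpace.proj (0 : Fin 2)).contDiff)

theorem hasGradientAt_trough (hp : ∀ x, HasDerivAt p (p' x) x) (w : EuclideanSpace ℝ (Fin 2)) :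
    HasGradientAt (trough p) !₂[-p' (w 0), 2 * w 1] w := by
  have h0 := (hp (w 0)).comp_hasFDerivAt w (EuclideanSpace.proj (𝕜 := ℝ) (0 : Fin 2)).hasFDerivAt
  have h1 := (hasDerivAt_pow 2 (w 1)).comp_hasFDerivAt w
    (EuclideanSpace.proj (𝕜 := ℝ) (1 : Fin 2)).hasFDerivAt
  rw [hasGradientAt_iff_hasFDerivAt]
  refine (h1.sub h0).congr_fderiv (ContinuousLinearMap.ext fun v => ?_)
  simp [PiLp.inner_apply, Fin.sum_univ_two]
  ring

theorem gradient_trough (hp : ∀ x, HasDerivAt p (p' x) x) (w : EuclideanSpace ℝ (Fin 2)) :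
    gradient (trough p) w = !₂[-p' (w 0), 2 * w 1] :=
  (hasGradientAt_trough hp w).gradient

theorem gradient_trough_eq_zero_iff (hp : ∀ x, HasDerivAt p (p' x) x)
    {w : EuclideanSpace ℝ (Fin 2)} : gradient (trough p) w = 0 ↔ p' (w 0) = 0 ∧ w 1 = 0 := by
  simp [gradient_trough hp, funext_iff, Fin.forall_fin_two]

theorem not_isLocalMin_trough (hp : StrictMono p) (w : EuclideanSpace ℝ (Fin 2)) :
    ¬IsLocalMin (trough p) w := by
  intro hmin
  have hshift : Tendsto (fun t : ℝ => w + t • EuclideanSpace.single 0 1) (𝓝[>] 0) (𝓝 w) := by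
    have hcont : Continuous fun t : ℝ => w + t • EuclideanSpace.single (0 : Fin 2) (1 : ℝ) := by
      fun_prop
    simpa using tendsto_nhdsWithin_of_tendsto_nhds (hcont.tendsto 0)
  obtain ⟨t, hle, ht⟩ := ((hshift.eventually hmin).and self_mem_nhdsWithin).exists
  have hshifted : trough p (w + t • EuclideanSpace.single 0 1) = w 1 ^ 2 - p (w 0 + t) := by
    simp [trough]
  rw [hshifted, trough] at hle
  linarith [hp (lt_add_of_pos_right (w 0) ht)]

theorem iterate_sub_smul_gradient_trough (hp : ∀ x, HasDerivAt p (p' x) x) (α : ℝ)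
    {w : EuclideanSpace ℝ (Fin 2)} (hw : p' (w 0) = 0) (k : ℕ) :
    (fun u => u - α • gradient (trough p) u)^[k] w = !₂[w 0, (1 - 2 * α) ^ k * w 1] := by
  induction k with
  | zero => ext i; fin_cases i <;> simp
  | succ k ih =>
    rw [Function.iterate_succ_apply', ih, gradient_trough hp]
    ext i; fin_cases i <;> simp [hw]; ring

theorem tendsto_iterate_sub_smul_gradient_trough (hp : ∀ x, HasDerivAt p (p' x) x) {α : ℝ}
    (hα₀ : 0 < α) (hα₁ : α < 1) {w : EuclideanSpace ℝ (Fin 2)} (hw : p' (w 0) = 0) :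
    Tendsto (fun k => (fun u => u - α • gradient (trough p) u)^[k] w) atTop (𝓝 !₂[w 0, 0]) := by
  have hpow : Tendsto (fun k : ℕ => (1 - 2 * α) ^ k * w 1) atTop (𝓝 0) := by
    simpa using (tendsto_pow_atTop_nhds_zero_of_abs_lt_one
      (abs_lt.2 ⟨by linarith, by linarith⟩)).mul_const (w 1)
  have hcont : Continuous fun t : ℝ => !₂[w 0, t] := by fun_prop
  simp_rw [iterate_sub_smul_gradient_trough hp α hw]
  exact (hcont.tendsto 0).comp hpow

end Trough

theorem stmt14 :
    ∃ (f : EuclideanSpace ℝ (Fin 2) → ℝ) (α : ℝ),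
      ContDiff ℝ 1 f ∧ 0 < α ∧ α < 1 / 2 ∧
      volume {p : EuclideanSpace ℝ (Fin 2) | gradient f p = 0 ∧ ¬ IsLocalMin f p} = 0 ∧
      0 < volume {w : EuclideanSpace ℝ (Fin 2) |
        ∃ p, (gradient f p = 0 ∧ ¬ IsLocalMin f p) ∧
          Tendsto (fun k => (fun u => u - α • gradient f u)^[k] w) atTop (nhds p)} := by
  obtain ⟨p, p', hC1, hp, hmono, hZ⟩ := exists_strictMono_hasDerivAt_volume_setOf_eq_zero_ne_zero
  refine ⟨trough p, 1 / 4, contDiff_trough hC1, by norm_num, by norm_num, ?_, ?_⟩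
  · exact measure_mono_null (fun w hw => ((gradient_trough_eq_zero_iff hp).1 hw.1).2)
      (EuclideanSpace.volume_setOf_apply_eq_zero 1)
  · refine pos_iff_ne_zero.2 fun h => EuclideanSpace.volume_setOf_apply_mem_ne_zero 0 hZ
      (measure_mono_null (fun w hw => ?_) h)
    exact ⟨!₂[w 0, 0],
      ⟨(gradient_trough_eq_zero_iff hp).2 ⟨hw, rfl⟩, not_isLocalMin_trough hmono _⟩,
      tendsto_iterate_sub_smul_gradient_trough hp (by norm_num) (by norm_num) hw⟩
end
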